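/- arXiv:1601.02242 — 10 statements merged into one kernel-verified Lean document; each statement's English description precedes it below -/
import Mathlib

section
/- Let C₀ > 0. Suppose K : 𝕋 × 𝕋 → ℂ is measurable on 𝕋 × 𝕋 ∖ {(w,w) : w ∈ 𝕋} and satisfies |K(w,τ)| ≤ C₀ for all w ≠ τ in 𝕋; suppose moreover that for each fixed τ ∈ 𝕋 the map θ ↦ K(e^{iθ}, τ) is differentiable at every θ with e^{iθ} ≠ τ, with derivative bounded by C₀/|e^{iθ}−τ|. Then for every β ∈ (0,1) there is a constant C_β depending only on β such that for every bounded measurable f : 𝕋 → ℂ, the function 𝒯f(w) = (1/(2πi)) ∫_{𝕋} K(w,τ) f(τ) dτ satisfies sup_{w∈𝕋} |𝒯f(w)| ≤ C_β C₀ ‖f‖_{L^∞(𝕋)} and |𝒯f(w₁) − 𝒯f(w₂)| ≤ C_β C₀ ‖f‖_{L^∞(𝕋)} |w₁ − w₂|^{β} for all w₁, w₂ ∈ 𝕋. -/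
/-!
Parametrise the circle by `θ ↦ e^{iθ}`. The sup bound is immediate from `|K| ≤ C₀`. For the
Hölder bound write `w₁ = e^{iθ₁}`, `w₂ = e^{iθ₂}` with `|θ₁ - θ₂| ≤ (π/2)|w₁ - w₂|`. If
`|τ - w₁| ≥ π|w₁ - w₂|`, the arc from `w₁` to `w₂` stays at distance `≥ |τ - w₁|/2` from `τ`, and
the mean value theorem gives `|K(w₁,τ) - K(w₂,τ)| ≤ π C₀ |w₁ - w₂| / |τ - w₁|`; otherwise the
trivial bound `2C₀` is better. Interpolating, `|K(w₁,τ) - K(w₂,τ)| ≤ 2C₀ (π|w₁ - w₂| / |τ - w₁|)^β`,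
and `|τ - w₁|^{-β}` is integrable on the circle because `β < 1`.
-/

/-- Mean value of a function over the positively oriented unit circle:
`(1/(2πi)) ∫_𝕋 g(τ) dτ`. -/
noncomputable def circAvg (g : ℂ → ℂ) : ℂ :=
  (2 * (Real.pi : ℂ) * Complex.I)⁻¹ * ∮ τ in C(0, 1), g τ

open Complex MeasureTheory Set
open scoped Real

lemma exp_mul_I_periodic : Function.Periodic (fun φ : ℝ => exp (φ * I)) (2 * π) := by
  simpa [circleMap_zero] using periodic_circleMap 0 1

lemma norm_exp_mul_I_sub_exp_mul_I_le (φ θ : ℝ) : ‖exp (φ * I) - exp (θ * I)‖ ≤ |φ - θ| := by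
  simpa [circleMap_zero, dist_eq_norm, Real.dist_eq] using
    (lipschitzWith_circleMap 0 1).dist_le_mul φ θ

lemma mul_abs_sub_le_norm_exp_mul_I_sub_exp_mul_I {φ θ : ℝ} (h : |φ - θ| ≤ π) :
    2 / π * |φ - θ| ≤ ‖exp (φ * I) - exp (θ * I)‖ := by
  wlog hmem : φ - θ ∈ Ioc (-π) π generalizing φ θ
  · have hπ : θ - φ = π := by
      rw [abs_le] at h
      simp only [mem_Ioc, not_and_or, not_lt, not_le] at hmem
      rcases hmem with h' | h' <;> linarith
    rw [abs_sub_comm, norm_sub_rev]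
    exact this (by rw [hπ, abs_of_pos Real.pi_pos])
      (by rw [hπ]; constructor <;> linarith [Real.pi_pos])
  have := mul_angle_le_norm_sub (norm_exp_ofReal_mul_I φ) (norm_exp_ofReal_mul_I θ)
  rwa [angle_exp_exp, (toIocMod_eq_self _).2 (by rwa [two_mul, neg_add_cancel_left])] at this

lemma exists_exp_mul_I_eq_of_norm_eq_one {w₁ w₂ : ℂ} (hw₁ : ‖w₁‖ = 1) (hw₂ : ‖w₂‖ = 1) :
    ∃ θ₁ θ₂ : ℝ, exp (θ₁ * I) = w₁ ∧ exp (θ₂ * I) = w₂ ∧ |θ₁ - θ₂| ≤ π / 2 * ‖w₁ - w₂‖ := by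
  obtain ⟨θ₁, rfl⟩ := (norm_eq_one_iff w₁).1 hw₁
  have hq : ‖w₂ / exp (θ₁ * I)‖ = 1 := by rw [norm_div, hw₂, hw₁, div_one]
  refine ⟨θ₁, θ₁ + arg (w₂ / exp (θ₁ * I)), rfl, ?_, ?_⟩
  · have := norm_mul_exp_arg_mul_I (w₂ / exp (θ₁ * I))
    rw [hq, ofReal_one, one_mul] at this
    push_cast
    rw [add_mul, Complex.exp_add, this, mul_div_cancel₀ _ (Complex.exp_ne_zero _)]
  · rw [abs_sub_comm, norm_sub_rev, add_sub_cancel_left,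
      ← angle_eq_abs_arg (by rintro rfl; simp at hw₂) (Complex.exp_ne_zero _)]
    exact angle_le_mul_norm_sub hw₂ hw₁

lemma countable_setOf_exp_mul_I_eq (w : ℂ) : {φ : ℝ | exp (φ * I) = w}.Countable := by
  simpa [circleMap_zero, Set.preimage, eq_comm] using
    (countable_singleton w).preimage_circleMap 0 one_ne_zero

lemma ae_exp_mul_I_ne (w : ℂ) : ∀ᵐ φ : ℝ, exp (φ * I) ≠ w :=
  (countable_setOf_exp_mul_I_eq w).ae_notMem volume

lemma measurable_comp_exp_mul_I_of_measurable_domRestrict {K : ℂ → ℂ → ℂ}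
    (hK : Measurable (({p : ℂ × ℂ | ‖p.1‖ = 1 ∧ ‖p.2‖ = 1 ∧ p.1 ≠ p.2}).domRestrict
      fun p : ℂ × ℂ => K p.1 p.2))
    {w : ℂ} (hw : ‖w‖ = 1) : Measurable fun φ : ℝ => K w (exp (φ * I)) := by
  have hU := countable_setOf_exp_mul_I_eq w
  refine measurable_of_restrict_of_restrict_compl hU.measurableSet ?_ ?_
  · have := hU.to_subtype
    exact measurable_of_countable _
  · have hexp : Measurable fun φ : ℝ => exp (φ * I) := by fun_prop
    have hmap : Measurable fun φ : ↥{φ : ℝ | exp (φ * I) = w}ᶜ =>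
        (⟨(w, exp (φ * I)), hw, norm_exp_ofReal_mul_I φ, fun h => φ.2 h.symm⟩ :
          ↥{p : ℂ × ℂ | ‖p.1‖ = 1 ∧ ‖p.2‖ = 1 ∧ p.1 ≠ p.2}) :=
      (measurable_const.prodMk (hexp.comp measurable_subtype_coe)).subtype_mk
    exact hK.comp hmap

lemma circleIntegrable_of_ae_norm_le {g : ℂ → ℂ} {B : ℝ}
    (hg : AEStronglyMeasurable (fun φ : ℝ => g (exp (φ * I))))
    (hB : ∀ᵐ φ : ℝ, ‖g (exp (φ * I))‖ ≤ B) : CircleIntegrable g 0 1 := by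
  simp only [CircleIntegrable, circleMap_zero, ofReal_one, one_mul]
  exact (intervalIntegrable_const (c := B)).mono_fun' hg.restrict (ae_restrict_of_ae hB)

lemma circAvg_sub {g₁ g₂ : ℂ → ℂ} (h₁ : CircleIntegrable g₁ 0 1) (h₂ : CircleIntegrable g₂ 0 1) :
    circAvg g₁ - circAvg g₂ = circAvg fun τ => g₁ τ - g₂ τ := by
  simp only [circAvg, circleIntegral.integral_sub h₁ h₂, mul_sub]

lemma norm_circAvg_le {g : ℂ → ℂ} {b : ℝ → ℝ} (hb : IntervalIntegrable b volume 0 (2 * π))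
    (hgb : ∀ᵐ φ : ℝ, ‖g (exp (φ * I))‖ ≤ b φ) :
    ‖circAvg g‖ ≤ (2 * π)⁻¹ * ∫ φ in 0..2 * π, b φ := by
  have hint : ‖∮ τ in C(0, 1), g τ‖ ≤ ∫ φ in 0..2 * π, b φ := by
    refine intervalIntegral.norm_integral_le_of_norm_le Real.two_pi_pos.le ?_ hb
    filter_upwards [hgb] with φ hφ _
    simpa [circleMap_zero] using hφ
  rw [circAvg, norm_mul, norm_inv, norm_mul, norm_mul, norm_I, mul_one, norm_real,
    Real.norm_of_nonneg Real.pi_pos.le, RCLike.norm_ofNat]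
  gcongr

lemma intervalIntegrable_abs_rpow {r : ℝ} (hr : -1 < r) (a b : ℝ) :
    IntervalIntegrable (fun x => |x| ^ r) volume a b := by
  suffices h : ∀ c, 0 ≤ c → IntervalIntegrable (fun x => |x| ^ r) volume 0 c by
    have h' : ∀ c, IntervalIntegrable (fun x => |x| ^ r) volume 0 c := by
      intro c
      rcases le_total 0 c with hc | hc
      · exact h c hc
      · rw [IntervalIntegrable.iff_comp_neg, neg_zero]
        simpa only [abs_neg] using h (-c) (neg_nonneg.2 hc)
    exact (h' a).symm.trans (h' b)
  intro c hc
  refine (intervalIntegral.intervalIntegrable_rpow' hr).congr ?_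
  intro x hx
  rw [uIoc_of_le hc] at hx
  simp [abs_of_pos hx.1]

lemma integral_abs_rpow_symm {r c : ℝ} (hr : -1 < r) (hc : 0 ≤ c) :
    ∫ x in -c..c, |x| ^ r = 2 * (c ^ (r + 1) / (r + 1)) := by
  have half : ∫ x in 0..c, |x| ^ r = c ^ (r + 1) / (r + 1) := by
    rw [intervalIntegral.integral_congr (g := fun x => x ^ r), integral_rpow (Or.inl hr),
      Real.zero_rpow (by linarith), sub_zero]
    intro x hx
    rw [uIcc_of_le hc] at hx
    simp [abs_of_nonneg hx.1]
  rw [← intervalIntegral.integral_add_adjacent_intervals (b := 0)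
    (intervalIntegrable_abs_rpow hr _ _) (intervalIntegrable_abs_rpow hr _ _)]
  have := intervalIntegral.integral_comp_neg (a := 0) (b := c) fun x => |x| ^ r
  simp only [abs_neg, neg_zero] at this
  rw [← this, half]
  ring

lemma norm_exp_mul_I_sub_rpow_neg_le {β φ θ : ℝ} (hβ : 0 < β) (h : |φ - θ| ≤ π) :
    ‖exp (φ * I) - exp (θ * I)‖ ^ (-β) ≤ (π / 2) ^ β * |φ - θ| ^ (-β) := by
  rcases eq_or_ne φ θ with rfl | hne
  · -- both sides are `0 ^ (-β) = 0` under the `rpow` convention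
    simp [Real.zero_rpow (neg_ne_zero.2 hβ.ne')]
  have hpos : 0 < 2 / π * |φ - θ| := by
    have := abs_pos.2 (sub_ne_zero.2 hne)
    positivity
  calc ‖exp (φ * I) - exp (θ * I)‖ ^ (-β) ≤ (2 / π * |φ - θ|) ^ (-β) :=
        Real.rpow_le_rpow_of_nonpos hpos (mul_abs_sub_le_norm_exp_mul_I_sub_exp_mul_I h)
          (by linarith)
    _ = (π / 2) ^ β * |φ - θ| ^ (-β) := by
        rw [Real.mul_rpow (by positivity) (abs_nonneg _), Real.rpow_neg (by positivity),
          ← Real.inv_rpow (by positivity), inv_div]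

lemma intervalIntegrable_norm_exp_mul_I_sub_rpow_neg_and_integral_le {β : ℝ} (hβ0 : 0 < β)
    (hβ1 : β < 1) {w : ℂ} (hw : ‖w‖ = 1) :
    IntervalIntegrable (fun φ : ℝ => ‖exp (φ * I) - w‖ ^ (-β)) volume 0 (2 * π) ∧
      ∫ φ in 0..2 * π, ‖exp (φ * I) - w‖ ^ (-β) ≤ (π / 2) ^ β * (2 * (π ^ (1 - β) / (1 - β))) := by
  obtain ⟨θ, rfl⟩ := (norm_eq_one_iff w).1 hw
  set g : ℝ → ℝ := fun φ => ‖exp (φ * I) - exp (θ * I)‖ ^ (-β)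
  have hg : Function.Periodic g (2 * π) :=
    exp_mul_I_periodic.comp fun z => ‖z - exp (θ * I)‖ ^ (-β)
  set a := θ - π
  have hab : a ≤ a + 2 * π := by linarith [Real.pi_pos]
  have hdom : ∀ φ ∈ Icc a (a + 2 * π), g φ ≤ (π / 2) ^ β * |φ - θ| ^ (-β) := by
    intro φ hφ
    refine norm_exp_mul_I_sub_rpow_neg_le hβ0 (abs_le.2 ⟨?_, ?_⟩) <;> linarith [hφ.1, hφ.2]
  have hbound :
      IntervalIntegrable (fun φ => (π / 2) ^ β * |φ - θ| ^ (-β)) volume a (a + 2 * π) := by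
    have := ((intervalIntegrable_abs_rpow (r := -β) (by linarith) (-π) π).comp_sub_right
      θ).const_mul ((π / 2) ^ β)
    convert this using 1 <;> ring
  have hint : IntervalIntegrable g volume a (a + 2 * π) := by
    refine hbound.mono_fun' (by fun_prop) ?_
    filter_upwards [ae_restrict_mem measurableSet_uIoc] with φ hφ
    rw [uIoc_of_le hab] at hφ
    rw [Real.norm_of_nonneg (Real.rpow_nonneg (norm_nonneg _) _)]
    exact hdom φ (Ioc_subset_Icc_self hφ)
  refine ⟨hg.intervalIntegrable Real.two_pi_pos.ne' hint _ _, ?_⟩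
  calc ∫ φ in 0..2 * π, g φ = ∫ φ in a..a + 2 * π, g φ := by
        simpa using hg.intervalIntegral_add_eq 0 a
    _ ≤ ∫ φ in a..a + 2 * π, (π / 2) ^ β * |φ - θ| ^ (-β) :=
        intervalIntegral.integral_mono_on hab hint hbound hdom
    _ = (π / 2) ^ β * (2 * (π ^ (1 - β) / (1 - β))) := by
        rw [intervalIntegral.integral_const_mul,
          intervalIntegral.integral_comp_sub_right (fun x => |x| ^ (-β)),
          show a - θ = -π by ring, show a + 2 * π - θ = π by ring,
          integral_abs_rpow_symm (by linarith) Real.pi_pos.le, neg_add_eq_sub]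

def AngularDerivBound (K : ℂ → ℂ → ℂ) (C₀ : ℝ) (τ : ℂ) : Prop :=
  ∀ θ : ℝ, exp (θ * I) ≠ τ → ∃ d : ℂ,
    HasDerivAt (fun s : ℝ => K (exp (s * I)) τ) d θ ∧ ‖d‖ ≤ C₀ / ‖exp (θ * I) - τ‖

section Kernel

variable {K : ℂ → ℂ → ℂ} {C₀ : ℝ} {τ : ℂ}

lemma AngularDerivBound.norm_sub_le_mul_abs_sub (hK : AngularDerivBound K C₀ τ) (hC₀ : 0 ≤ C₀)
    {r : ℝ} (hr : 0 < r) {θ₁ θ₂ : ℝ} (hfar : ∀ θ ∈ uIcc θ₁ θ₂, r ≤ ‖exp (θ * I) - τ‖) :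
    ‖K (exp (θ₂ * I)) τ - K (exp (θ₁ * I)) τ‖ ≤ C₀ / r * |θ₂ - θ₁| := by
  have hne : ∀ θ ∈ uIcc θ₁ θ₂, exp (θ * I) ≠ τ := fun θ hθ h => by
    have := hfar θ hθ
    rw [h, sub_self, norm_zero] at this
    linarith
  choose! d hd hdb using fun θ (hθ : θ ∈ uIcc θ₁ θ₂) => hK θ (hne θ hθ)
  simpa [Real.norm_eq_abs] using (convex_uIcc θ₁ θ₂).norm_image_sub_le_of_norm_hasDerivWithin_le
    (fun θ hθ => (hd θ hθ).hasDerivWithinAt)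
    (fun θ hθ => (hdb θ hθ).trans (div_le_div_of_nonneg_left hC₀ hr (hfar θ hθ)))
    left_mem_uIcc right_mem_uIcc

lemma AngularDerivBound.norm_sub_le_rpow (hK : AngularDerivBound K C₀ τ) (hC₀ : 0 ≤ C₀)
    (hbd : ∀ w, ‖w‖ = 1 → w ≠ τ → ‖K w τ‖ ≤ C₀) {β : ℝ} (hβ0 : 0 ≤ β) (hβ1 : β ≤ 1)
    {w₁ w₂ : ℂ} (hw₁ : ‖w₁‖ = 1) (hw₂ : ‖w₂‖ = 1) (h₁ : w₁ ≠ τ) (h₂ : w₂ ≠ τ) :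
    ‖K w₁ τ - K w₂ τ‖ ≤ 2 * C₀ * (π * ‖w₁ - w₂‖) ^ β * ‖τ - w₁‖ ^ (-β) := by
  have hτw : 0 < ‖τ - w₁‖ := norm_pos_iff.2 (sub_ne_zero.2 h₁.symm)
  set x := π * ‖w₁ - w₂‖ / ‖τ - w₁‖ with hx_def
  have hx : 0 ≤ x := by positivity
  suffices ‖K w₁ τ - K w₂ τ‖ ≤ 2 * C₀ * x ^ β by
    rwa [Real.div_rpow (by positivity) hτw.le, div_eq_mul_inv, ← Real.rpow_neg hτw.le,
      ← mul_assoc] at this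
  rcases le_or_gt x 1 with hx1 | hx1
  · obtain ⟨θ₁, θ₂, rfl, rfl, hθ⟩ := exists_exp_mul_I_eq_of_norm_eq_one hw₁ hw₂
    have hnear : π * ‖exp (θ₁ * I) - exp (θ₂ * I)‖ ≤ ‖τ - exp (θ₁ * I)‖ :=
      (div_le_one hτw).1 hx1
    have hfar : ∀ θ ∈ uIcc θ₁ θ₂, ‖τ - exp (θ₁ * I)‖ / 2 ≤ ‖exp (θ * I) - τ‖ := by
      intro θ hmem
      linarith [norm_sub_le_norm_sub_add_norm_sub (exp (θ₁ * I)) (exp (θ * I)) τ,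
        norm_exp_mul_I_sub_exp_mul_I_le θ₁ θ, abs_sub_left_of_mem_uIcc hmem,
        norm_sub_rev τ (exp (θ₁ * I)), abs_sub_comm θ₁ θ, abs_sub_comm θ₁ θ₂]
    calc ‖K (exp (θ₁ * I)) τ - K (exp (θ₂ * I)) τ‖
          = ‖K (exp (θ₂ * I)) τ - K (exp (θ₁ * I)) τ‖ := norm_sub_rev _ _
      _ ≤ C₀ / (‖τ - exp (θ₁ * I)‖ / 2) * |θ₂ - θ₁| :=
          hK.norm_sub_le_mul_abs_sub hC₀ (by positivity) hfar
      _ ≤ C₀ / (‖τ - exp (θ₁ * I)‖ / 2) * (π / 2 * ‖exp (θ₁ * I) - exp (θ₂ * I)‖) := by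
          rw [abs_sub_comm]
          gcongr
      _ = C₀ * x := by
          rw [hx_def]
          field_simp
      _ ≤ 2 * C₀ * x ^ β := by
          have := Real.self_le_rpow_of_le_one hx hx1 hβ1
          nlinarith
  · calc ‖K w₁ τ - K w₂ τ‖ ≤ ‖K w₁ τ‖ + ‖K w₂ τ‖ := norm_sub_le _ _
      _ ≤ C₀ + C₀ := add_le_add (hbd w₁ hw₁ h₁) (hbd w₂ hw₂ h₂)
      _ ≤ 2 * C₀ * x ^ β := by
          have := Real.one_le_rpow hx1.le hβ0
          nlinarith

end Kernel

section Operator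

variable {K : ℂ → ℂ → ℂ} {f : ℂ → ℂ} {C₀ M : ℝ}

lemma ae_norm_kernel_mul_le (hC₀ : 0 ≤ C₀)
    (hKbd : ∀ w τ : ℂ, ‖w‖ = 1 → ‖τ‖ = 1 → w ≠ τ → ‖K w τ‖ ≤ C₀)
    (hfM : ∀ τ : ℂ, ‖τ‖ = 1 → ‖f τ‖ ≤ M) {w : ℂ} (hw : ‖w‖ = 1) :
    ∀ᵐ φ : ℝ, ‖K w (exp (φ * I)) * f (exp (φ * I))‖ ≤ C₀ * M := by
  filter_upwards [ae_exp_mul_I_ne w] with φ hφ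
  rw [norm_mul]
  exact mul_le_mul (hKbd _ _ hw (norm_exp_ofReal_mul_I φ) hφ.symm)
    (hfM _ (norm_exp_ofReal_mul_I φ)) (norm_nonneg _) hC₀

lemma norm_circAvg_kernel_mul_le (hC₀ : 0 ≤ C₀)
    (hKbd : ∀ w τ : ℂ, ‖w‖ = 1 → ‖τ‖ = 1 → w ≠ τ → ‖K w τ‖ ≤ C₀)
    (hfM : ∀ τ : ℂ, ‖τ‖ = 1 → ‖f τ‖ ≤ M) {w : ℂ} (hw : ‖w‖ = 1) :
    ‖circAvg fun τ => K w τ * f τ‖ ≤ C₀ * M := by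
  have := norm_circAvg_le (g := fun τ => K w τ * f τ) intervalIntegrable_const
    (ae_norm_kernel_mul_le hC₀ hKbd hfM hw)
  rwa [intervalIntegral.integral_const, sub_zero, smul_eq_mul, inv_mul_cancel_left₀
    Real.two_pi_pos.ne'] at this

lemma norm_circAvg_kernel_mul_sub_le
    (hK : Measurable (({p : ℂ × ℂ | ‖p.1‖ = 1 ∧ ‖p.2‖ = 1 ∧ p.1 ≠ p.2}).domRestrict
      fun p : ℂ × ℂ => K p.1 p.2))
    (hC₀ : 0 ≤ C₀) (hKbd : ∀ w τ : ℂ, ‖w‖ = 1 → ‖τ‖ = 1 → w ≠ τ → ‖K w τ‖ ≤ C₀)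
    (hKder : ∀ τ : ℂ, ‖τ‖ = 1 → AngularDerivBound K C₀ τ)
    (hf : Measurable f) (hfM : ∀ τ : ℂ, ‖τ‖ = 1 → ‖f τ‖ ≤ M) {β : ℝ} (hβ0 : 0 < β)
    (hβ1 : β < 1) {w₁ w₂ : ℂ} (hw₁ : ‖w₁‖ = 1) (hw₂ : ‖w₂‖ = 1) :
    ‖circAvg (fun τ => K w₁ τ * f τ) - circAvg (fun τ => K w₂ τ * f τ)‖ ≤
      2 * (π / 2) ^ β / (1 - β) * C₀ * M * ‖w₁ - w₂‖ ^ β := by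
  have hM : 0 ≤ M := (norm_nonneg _).trans (hfM 1 norm_one)
  have hint : ∀ w : ℂ, ‖w‖ = 1 → CircleIntegrable (fun τ => K w τ * f τ) 0 1 := fun w hw =>
    circleIntegrable_of_ae_norm_le
      ((measurable_comp_exp_mul_I_of_measurable_domRestrict hK hw).mul
        (hf.comp (by fun_prop))).aestronglyMeasurable (ae_norm_kernel_mul_le hC₀ hKbd hfM hw)
  obtain ⟨hgi, hgle⟩ :=
    intervalIntegrable_norm_exp_mul_I_sub_rpow_neg_and_integral_le hβ0 hβ1 hw₁
  set c := 2 * C₀ * (π * ‖w₁ - w₂‖) ^ β * M with hc_def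
  have hpoint : ∀ᵐ φ : ℝ, ‖K w₁ (exp (φ * I)) * f (exp (φ * I)) - K w₂ (exp (φ * I)) *
      f (exp (φ * I))‖ ≤ c * ‖exp (φ * I) - w₁‖ ^ (-β) := by
    filter_upwards [ae_exp_mul_I_ne w₁, ae_exp_mul_I_ne w₂] with φ h₁ h₂
    have hτ := norm_exp_ofReal_mul_I φ
    rw [← sub_mul, norm_mul]
    calc _ ≤ (2 * C₀ * (π * ‖w₁ - w₂‖) ^ β * ‖exp (φ * I) - w₁‖ ^ (-β)) * M :=
          mul_le_mul ((hKder _ hτ).norm_sub_le_rpow hC₀ (fun w hw hne => hKbd w _ hw hτ hne)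
            hβ0.le hβ1.le hw₁ hw₂ h₁.symm h₂.symm) (hfM _ hτ) (norm_nonneg _) (by positivity)
      _ = c * ‖exp (φ * I) - w₁‖ ^ (-β) := by ring
  have hπβ : π ^ β * π ^ (1 - β) = π := by
    rw [← Real.rpow_add Real.pi_pos, add_sub_cancel, Real.rpow_one]
  rw [circAvg_sub (hint w₁ hw₁) (hint w₂ hw₂)]
  calc _ ≤ (2 * π)⁻¹ * ∫ φ in 0..2 * π, c * ‖exp (φ * I) - w₁‖ ^ (-β) :=
        norm_circAvg_le (hgi.const_mul c) hpoint
    _ ≤ (2 * π)⁻¹ * (c * ((π / 2) ^ β * (2 * (π ^ (1 - β) / (1 - β))))) := by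
        rw [intervalIntegral.integral_const_mul]
        gcongr
    _ = 2 * (π / 2) ^ β / (1 - β) * C₀ * M * ‖w₁ - w₂‖ ^ β := by
        have : 1 - β ≠ 0 := by linarith
        rw [hc_def, Real.mul_rpow Real.pi_pos.le (norm_nonneg _)]
        field_simp
        linear_combination (C₀ * M * ‖w₁ - w₂‖ ^ β) * hπβ

end Operator

theorem stmt1 (β : ℝ) (hβ0 : 0 < β) (hβ1 : β < 1) :
    ∃ Cβ : ℝ, 0 < Cβ ∧
      ∀ (C₀ : ℝ), 0 < C₀ → ∀ (K : ℂ → ℂ → ℂ),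
        Measurable (({p : ℂ × ℂ | ‖p.1‖ = 1 ∧ ‖p.2‖ = 1 ∧ p.1 ≠ p.2}).restrict
          fun p : ℂ × ℂ => K p.1 p.2) →
        (∀ w τ : ℂ, ‖w‖ = 1 → ‖τ‖ = 1 → w ≠ τ → ‖K w τ‖ ≤ C₀) →
        (∀ τ : ℂ, ‖τ‖ = 1 → ∀ θ : ℝ, Complex.exp (θ * Complex.I) ≠ τ →
          ∃ d : ℂ, HasDerivAt (fun s : ℝ => K (Complex.exp (s * Complex.I)) τ) d θ ∧
            ‖d‖ ≤ C₀ / ‖Complex.exp (θ * Complex.I) - τ‖) →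
        ∀ (f : ℂ → ℂ) (M : ℝ), Measurable f → (∀ τ : ℂ, ‖τ‖ = 1 → ‖f τ‖ ≤ M) →
          (∀ w : ℂ, ‖w‖ = 1 →
            ‖circAvg (fun τ => K w τ * f τ)‖ ≤ Cβ * C₀ * M) ∧
          (∀ w₁ w₂ : ℂ, ‖w₁‖ = 1 → ‖w₂‖ = 1 →
            ‖circAvg (fun τ => K w₁ τ * f τ) - circAvg (fun τ => K w₂ τ * f τ)‖ ≤
              Cβ * C₀ * M * ‖w₁ - w₂‖ ^ β) := by
  have h1β : 0 < 1 - β := sub_pos.2 hβ1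
  have hCβ : 1 ≤ 2 * (π / 2) ^ β / (1 - β) := by
    have := Real.one_le_rpow (by linarith [Real.pi_gt_three] : 1 ≤ π / 2) hβ0.le
    rw [le_div_iff₀ h1β]
    linarith
  refine ⟨2 * (π / 2) ^ β / (1 - β), by positivity, ?_⟩
  intro C₀ hC₀ K hK hKbd hKder f M hf hfM
  refine ⟨fun w hw => ?_, fun w₁ w₂ hw₁ hw₂ =>
    norm_circAvg_kernel_mul_sub_le hK hC₀.le hKbd hKder hf hfM hβ0 hβ1 hw₁ hw₂⟩
  have hM : 0 ≤ M := (norm_nonneg _).trans (hfM 1 norm_one)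
  calc _ ≤ C₀ * M := norm_circAvg_kernel_mul_le hC₀.le hKbd hfM hw
    _ ≤ 2 * (π / 2) ^ β / (1 - β) * C₀ * M := by
        rw [mul_assoc]
        exact le_mul_of_one_le_left (by positivity) hCβ
end

section
/- Let 0 < α < 1. For every w ∈ ℂ with |w| = 1, (1/(2πi)) ∫_{𝕋} 1/|τ − w|^α dτ = (α Γ(1−α) / ((2−α) Γ(1−α/2)²)) · w. -/
open Real MeasureTheory Set

lemma ofReal_rpow_mul_one_sub_rpow {a b x : ℝ} (hx : x ∈ Icc (0:ℝ) 1) :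
    ((x ^ (a - 1) * (1 - x) ^ (b - 1) : ℝ) : ℂ) =
      (x : ℂ) ^ ((a : ℂ) - 1) * (1 - (x : ℂ)) ^ ((b : ℂ) - 1) := by
  rw [Complex.ofReal_mul, Complex.ofReal_cpow hx.1, Complex.ofReal_cpow (sub_nonneg.2 hx.2)]
  push_cast
  rfl

lemma intervalIntegrable_rpow_mul_one_sub_rpow {a b : ℝ} (ha : 0 < a) (hb : 0 < b) :
    IntervalIntegrable (fun x : ℝ => x ^ (a - 1) * (1 - x) ^ (b - 1)) volume 0 1 := by
  refine (Complex.betaIntegral_convergent (u := a) (v := b) (by simpa) (by simpa)).norm.congr ?_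
  intro x hx
  rw [uIoc_of_le zero_le_one] at hx
  dsimp only
  rw [← ofReal_rpow_mul_one_sub_rpow (Ioc_subset_Icc_self hx), Complex.norm_real, norm_of_nonneg]
  exact mul_nonneg (rpow_nonneg hx.1.le _) (rpow_nonneg (sub_nonneg.2 hx.2) _)

lemma integral_rpow_mul_one_sub_rpow {a b : ℝ} (ha : 0 < a) (hb : 0 < b) :
    ∫ x in (0:ℝ)..1, x ^ (a - 1) * (1 - x) ^ (b - 1) = Gamma a * Gamma b / Gamma (a + b) := by
  rw [← ProbabilityTheory.beta, ProbabilityTheory.beta_eq_betaIntegralReal a b ha hb,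
    Complex.betaIntegral, ← intervalIntegral.integral_congr fun x hx =>
      ofReal_rpow_mul_one_sub_rpow (by rwa [uIcc_of_le zero_le_one] at hx),
    intervalIntegral.integral_ofReal, Complex.ofReal_re]

section OneSubCosDivTwo

lemma hasDerivAt_one_sub_cos_div_two (u : ℝ) :
    HasDerivAt (fun u => (1 - cos u) / 2) (sin u / 2) u := by
  simpa using ((hasDerivAt_cos u).const_sub 1).div_const 2

lemma image_one_sub_cos_div_two_Icc :
    (fun u => (1 - cos u) / 2) '' Icc 0 π = Icc 0 1 := by
  ext x
  constructor
  · rintro ⟨u, -, rfl⟩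
    constructor <;> linarith [neg_one_le_cos u, cos_le_one u]
  · intro hx
    obtain ⟨u, hu, hcos⟩ := bijOn_cos.surjOn (show 1 - 2 * x ∈ Icc (-1 : ℝ) 1 by
      constructor <;> linarith [hx.1, hx.2])
    exact ⟨u, hu, by simp only [hcos]; ring⟩

lemma injOn_one_sub_cos_div_two : InjOn (fun u => (1 - cos u) / 2) (Icc 0 π) :=
  fun u hu v hv h => injOn_cos hu hv (by simp only at h; linarith)

variable {E : Type*} [NormedAddCommGroup E] [NormedSpace ℝ E]

lemma integrableOn_Icc_iff_comp_one_sub_cos_div_two (g : ℝ → E) :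
    IntegrableOn g (Icc 0 1) ↔
      IntegrableOn (fun u => (sin u / 2) • g ((1 - cos u) / 2)) (Ioo 0 π) := by
  rw [← image_one_sub_cos_div_two_Icc, integrableOn_image_iff_integrableOn_abs_deriv_smul
    measurableSet_Icc (fun u _ => (hasDerivAt_one_sub_cos_div_two u).hasDerivWithinAt)
    injOn_one_sub_cos_div_two, integrableOn_Icc_iff_integrableOn_Ioo]
  refine integrableOn_congr_fun (fun u hu => ?_) measurableSet_Ioo
  rw [abs_of_pos (div_pos (sin_pos_of_pos_of_lt_pi hu.1 hu.2) two_pos)]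

lemma setIntegral_Icc_eq_comp_one_sub_cos_div_two (g : ℝ → E) :
    ∫ x in Icc 0 1, g x = ∫ u in Ioo 0 π, (sin u / 2) • g ((1 - cos u) / 2) := by
  rw [← image_one_sub_cos_div_two_Icc, integral_image_eq_integral_abs_deriv_smul
    measurableSet_Icc (fun u _ => (hasDerivAt_one_sub_cos_div_two u).hasDerivWithinAt)
    injOn_one_sub_cos_div_two, integral_Icc_eq_integral_Ioo]
  refine setIntegral_congr_fun measurableSet_Ioo (fun u hu => ?_)
  rw [abs_of_pos (div_pos (sin_pos_of_pos_of_lt_pi hu.1 hu.2) two_pos)]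

end OneSubCosDivTwo

lemma half_sin_mul_rpow_mul_one_sub_rpow (s : ℝ) {u : ℝ} (hu : u ∈ Ioo 0 π) :
    sin u / 2 * (((1 - cos u) / 2) ^ ((s + 1) / 2 - 1) * (1 - (1 - cos u) / 2) ^ ((s + 1) / 2 - 1))
      = 2 ^ (-s) * sin u ^ s := by
  have hy : 0 < sin u / 2 := div_pos (sin_pos_of_pos_of_lt_pi hu.1 hu.2) two_pos
  have hprod : (1 - cos u) / 2 * (1 - (1 - cos u) / 2) = (sin u / 2) ^ (2 : ℝ) := by
    rw [rpow_two]; nlinarith [sin_sq_add_cos_sq u]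
  rw [← mul_rpow (by linarith [cos_le_one u]) (by linarith [neg_one_le_cos u]), hprod,
    ← rpow_mul hy.le, mul_comm, ← rpow_add_one hy.ne', div_rpow (by linarith [hy]) two_pos.le,
    rpow_neg two_pos.le]
  ring_nf

lemma intervalIntegrable_sin_rpow {s : ℝ} (hs : -1 < s) :
    IntervalIntegrable (fun u => sin u ^ s) volume 0 π := by
  have ha : 0 < (s + 1) / 2 := by linarith
  have h := intervalIntegrable_rpow_mul_one_sub_rpow ha ha
  rw [intervalIntegrable_iff_integrableOn_Icc_of_le zero_le_one,
    integrableOn_Icc_iff_comp_one_sub_cos_div_two] at h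
  simp_rw [smul_eq_mul] at h
  rw [integrableOn_congr_fun (fun u hu => half_sin_mul_rpow_mul_one_sub_rpow s hu)
    measurableSet_Ioo, IntegrableOn,
    integrable_const_mul_iff (by positivity : (2:ℝ) ^ (-s) ≠ 0).isUnit] at h
  rwa [intervalIntegrable_iff_integrableOn_Ioo_of_le pi_pos.le]

lemma integral_sin_rpow_eq_beta {s : ℝ} (hs : -1 < s) :
    ∫ u in (0:ℝ)..π, sin u ^ s = 2 ^ s * Gamma ((s + 1) / 2) ^ 2 / Gamma (s + 1) := by
  have ha : 0 < (s + 1) / 2 := by linarith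
  have h := integral_rpow_mul_one_sub_rpow ha ha
  rw [intervalIntegral.integral_of_le zero_le_one, ← integral_Icc_eq_integral_Ioc,
    setIntegral_Icc_eq_comp_one_sub_cos_div_two] at h
  simp_rw [smul_eq_mul] at h
  rw [setIntegral_congr_fun measurableSet_Ioo
      (fun u hu => half_sin_mul_rpow_mul_one_sub_rpow s hu), integral_const_mul,
    ← integral_Ioc_eq_integral_Ioo, ← intervalIntegral.integral_of_le pi_pos.le,
    add_halves, rpow_neg two_pos.le] at h
  rw [sq, mul_div_assoc, ← h]
  field_simp

lemma integral_sin_rpow {s : ℝ} (hs : -1 < s) :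
    ∫ u in (0:ℝ)..π, sin u ^ s = π * Gamma (s + 1) / (2 ^ s * Gamma (s / 2 + 1) ^ 2) := by
  have hdup : Gamma ((s + 1) / 2) * Gamma (s / 2 + 1) = Gamma (s + 1) * 2 ^ (-s) * √π := by
    convert Gamma_mul_Gamma_add_half ((s + 1) / 2) using 3 <;> ring_nf
  have h2 : (2:ℝ) ^ s * 2 ^ (-s) = 1 := by rw [← rpow_add two_pos, add_neg_cancel, rpow_zero]
  have h3 : √π ^ 2 = π := sq_sqrt pi_pos.le
  rw [integral_sin_rpow_eq_beta hs, div_eq_div_iff (Gamma_pos_of_pos (by linarith)).ne'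
    (by have := Gamma_pos_of_pos (show 0 < s / 2 + 1 by linarith); positivity)]
  linear_combination (2 ^ s) ^ 2 * (Gamma ((s + 1) / 2) * Gamma (s / 2 + 1) +
    Gamma (s + 1) * 2 ^ (-s) * √π) * hdup +
    Gamma (s + 1) ^ 2 * √π ^ 2 * (2 ^ s * 2 ^ (-s) + 1) * h2 + Gamma (s + 1) ^ 2 * h3

lemma integral_sin_rpow_add_two {s : ℝ} (hs : -1 < s) :
    ∫ u in (0:ℝ)..π, sin u ^ (s + 2) = (s + 1) / (s + 2) * ∫ u in (0:ℝ)..π, sin u ^ s := by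
  rw [integral_sin_rpow hs, integral_sin_rpow (by linarith),
    show s + 2 + 1 = s + 1 + 1 + 1 by ring, Gamma_add_one (s := s + 1 + 1) (by linarith),
    Gamma_add_one (s := s + 1) (by linarith), show (s + 2) / 2 + 1 = s / 2 + 1 + 1 by ring,
    Gamma_add_one (s := s / 2 + 1) (by linarith), rpow_add two_pos, rpow_two]
  have := (Gamma_pos_of_pos (show 0 < s / 2 + 1 by linarith)).ne'
  have : s + 2 ≠ 0 := by linarith
  field_simp
  ring

lemma integral_sin_two_mul_mul_sin_rpow (s : ℝ) :
    ∫ u in (0:ℝ)..π, sin (2 * u) * sin u ^ s = 0 := by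
  have h := intervalIntegral.integral_comp_sub_left
    (fun u => sin (2 * u) * sin u ^ s) (a := 0) (b := π) π
  have hanti : ∀ u, sin (2 * (π - u)) * sin (π - u) ^ s = -(sin (2 * u) * sin u ^ s) := by
    intro u
    rw [sin_pi_sub, mul_sub, sin_sub, sin_two_pi, cos_two_pi]
    ring
  simp only [sub_self, sub_zero, hanti, intervalIntegral.integral_neg] at h
  linarith

lemma integral_cos_two_mul_mul_sin_rpow {s : ℝ} (hs : -1 < s) :
    ∫ u in (0:ℝ)..π, cos (2 * u) * sin u ^ s = -(s / (s + 2)) * ∫ u in (0:ℝ)..π, sin u ^ s := by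
  have hpt : ∀ u ∈ uIcc 0 π, cos (2 * u) * sin u ^ s = sin u ^ s - 2 * sin u ^ (s + 2) := by
    intro u hu
    rw [uIcc_of_le pi_pos.le] at hu
    rw [rpow_add' (sin_nonneg_of_nonneg_of_le_pi hu.1 hu.2) (by linarith), rpow_two, cos_two_mul,
      cos_sq']
    ring
  rw [intervalIntegral.integral_congr hpt, intervalIntegral.integral_sub
    (intervalIntegrable_sin_rpow hs) ((intervalIntegrable_sin_rpow (by linarith)).const_mul 2),
    intervalIntegral.integral_const_mul, integral_sin_rpow_add_two hs]
  have : s + 2 ≠ 0 := by linarith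
  field_simp
  ring

lemma integral_exp_two_mul_I_mul_sin_rpow {s : ℝ} (hs : -1 < s) :
    ∫ u in (0:ℝ)..π, Complex.exp (2 * u * Complex.I) * ((sin u ^ s : ℝ) : ℂ) =
      ((-(s / (s + 2)) * ∫ u in (0:ℝ)..π, sin u ^ s : ℝ) : ℂ) := by
  have hcos : IntervalIntegrable (fun u => (cos (2 * u) * sin u ^ s) • (1 : ℂ)) volume 0 π :=
    ((intervalIntegrable_sin_rpow hs).continuousOn_mul
      (by fun_prop : Continuous fun u => cos (2 * u)).continuousOn).smul_continuousOn
      continuousOn_const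
  have hsin : IntervalIntegrable (fun u => (sin (2 * u) * sin u ^ s) • Complex.I) volume 0 π :=
    ((intervalIntegrable_sin_rpow hs).continuousOn_mul
      (by fun_prop : Continuous fun u => sin (2 * u)).continuousOn).smul_continuousOn
      continuousOn_const
  have hpt : ∀ u : ℝ, Complex.exp (2 * u * Complex.I) * ((sin u ^ s : ℝ) : ℂ) =
      (cos (2 * u) * sin u ^ s) • (1 : ℂ) + (sin (2 * u) * sin u ^ s) • Complex.I := by
    intro u
    rw [← Complex.ofReal_ofNat, ← Complex.ofReal_mul, Complex.exp_mul_I, ← Complex.ofReal_cos,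
      ← Complex.ofReal_sin]
    simp only [Complex.real_smul]
    push_cast
    ring
  simp_rw [hpt]
  rw [intervalIntegral.integral_add hcos hsin, intervalIntegral.integral_smul_const,
    intervalIntegral.integral_smul_const, integral_sin_two_mul_mul_sin_rpow,
    integral_cos_two_mul_mul_sin_rpow hs]
  simp

lemma integral_exp_two_mul_I_mul_two_mul_sin_rpow {s : ℝ} (hs : -1 < s) :
    ∫ u in (0:ℝ)..π, Complex.exp (2 * u * Complex.I) * (((2 * sin u) ^ s : ℝ) : ℂ) =
      ((-(π * s * Gamma (s + 1) / ((s + 2) * Gamma (s / 2 + 1) ^ 2)) : ℝ) : ℂ) := by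
  have hpt : ∀ u ∈ uIcc 0 π, Complex.exp (2 * u * Complex.I) * (((2 * sin u) ^ s : ℝ) : ℂ) =
      ((2 ^ s : ℝ) : ℂ) * (Complex.exp (2 * u * Complex.I) * ((sin u ^ s : ℝ) : ℂ)) := by
    intro u hu
    rw [uIcc_of_le pi_pos.le] at hu
    rw [mul_rpow two_pos.le (sin_nonneg_of_nonneg_of_le_pi hu.1 hu.2)]
    push_cast
    ring
  rw [intervalIntegral.integral_congr hpt, intervalIntegral.integral_const_mul,
    integral_exp_two_mul_I_mul_sin_rpow hs, integral_sin_rpow hs, ← Complex.ofReal_mul]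
  congr 1
  have := (Gamma_pos_of_pos (show 0 < s / 2 + 1 by linarith)).ne'
  have : s + 2 ≠ 0 := by linarith
  field_simp

lemma circAvg_eq_integral (g : ℂ → ℂ) :
    circAvg g = (2 * π : ℂ)⁻¹ *
      ∫ θ in (0:ℝ)..2 * π, Complex.exp (θ * Complex.I) * g (Complex.exp (θ * Complex.I)) := by
  have h : ∀ θ : ℝ, deriv (circleMap 0 1) θ • g (circleMap 0 1 θ) =
      Complex.I * (Complex.exp (θ * Complex.I) * g (Complex.exp (θ * Complex.I))) := fun θ => by
    simp only [deriv_circleMap, circleMap, Complex.ofReal_one, one_mul, zero_add, smul_eq_mul]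
    ring
  rw [circAvg, circleIntegral, intervalIntegral.integral_congr fun θ _ => h θ,
    intervalIntegral.integral_const_mul]
  field_simp

lemma circAvg_norm_sub_eq_mul (F : ℝ → ℂ) {w : ℂ} (hw : ‖w‖ = 1) :
    circAvg (fun τ => F ‖τ - w‖) = w * circAvg (fun τ => F ‖τ - 1‖) := by
  have hw_exp : Complex.exp (Complex.arg w * Complex.I) = w := by
    simpa [hw] using Complex.norm_mul_exp_arg_mul_I w
  rw [circAvg_eq_integral, circAvg_eq_integral]
  set H : ℝ → ℂ := fun θ => Complex.exp (θ * Complex.I) * F ‖Complex.exp (θ * Complex.I) - w‖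
  have hper : Function.Periodic H (2 * π) := fun θ => by
    simp only [H, Complex.ofReal_add, add_mul, Complex.exp_add, Complex.ofReal_mul,
      Complex.ofReal_ofNat, Complex.exp_two_pi_mul_I, mul_one]
  have hrot : ∀ θ, H (θ + Complex.arg w) = w * (Complex.exp (θ * Complex.I) *
      F ‖Complex.exp (θ * Complex.I) - 1‖) := fun θ => by
    simp only [H, Complex.ofReal_add, add_mul, Complex.exp_add, hw_exp]
    rw [← sub_one_mul, norm_mul, hw, mul_one]
    ring
  have hshift : ∫ θ in (0:ℝ)..2 * π, H θ = ∫ θ in (0:ℝ)..2 * π, H (θ + Complex.arg w) := by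
    rw [intervalIntegral.integral_comp_add_right, zero_add, add_comm,
      ← hper.intervalIntegral_add_eq 0, zero_add]
  simp only [hshift, hrot, intervalIntegral.integral_const_mul]
  ring

lemma circAvg_norm_sub_one (F : ℝ → ℂ) :
    circAvg (fun τ => F ‖τ - 1‖) =
      (π : ℂ)⁻¹ * ∫ u in (0:ℝ)..π, Complex.exp (2 * u * Complex.I) * F (2 * sin u) := by
  set H : ℝ → ℂ := fun θ => Complex.exp (θ * Complex.I) * F ‖Complex.exp (θ * Complex.I) - 1‖
  have hdouble : ∫ θ in (0:ℝ)..2 * π, H θ = 2 * ∫ u in (0:ℝ)..π, H (2 * u) := by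
    rw [intervalIntegral.integral_comp_mul_left H two_ne_zero, mul_zero, Complex.real_smul]
    push_cast
    ring
  have hH : ∀ u ∈ uIcc 0 π, H (2 * u) = Complex.exp (2 * u * Complex.I) * F (2 * sin u) := by
    intro u hu
    rw [uIcc_of_le pi_pos.le] at hu
    simp only [H, mul_comm _ Complex.I, Complex.norm_exp_I_mul_ofReal_sub_one]
    rw [mul_div_cancel_left₀ u two_ne_zero, norm_of_nonneg
      (mul_nonneg two_pos.le (sin_nonneg_of_nonneg_of_le_pi hu.1 hu.2))]
    push_cast
    ring_nf
  rw [circAvg_eq_integral, hdouble, intervalIntegral.integral_congr hH]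
  ring

theorem stmt4_general (α : ℝ) (hα1 : α < 1) (w : ℂ) (hw : ‖w‖ = 1) :
    circAvg (fun τ => 1 / ((‖τ - w‖ ^ α : ℝ) : ℂ)) =
      ((α * Real.Gamma (1 - α) / ((2 - α) * Real.Gamma (1 - α / 2) ^ 2) : ℝ) : ℂ) * w := by
  have hpt : ∀ u ∈ uIcc 0 π,
      Complex.exp (2 * u * Complex.I) * (1 / (((2 * sin u) ^ α : ℝ) : ℂ)) =
        Complex.exp (2 * u * Complex.I) * (((2 * sin u) ^ (-α) : ℝ) : ℂ) := by
    intro u hu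
    rw [uIcc_of_le pi_pos.le] at hu
    rw [rpow_neg (mul_nonneg two_pos.le (sin_nonneg_of_nonneg_of_le_pi hu.1 hu.2)),
      Complex.ofReal_inv, one_div]
  have hcoeff : π⁻¹ * -(π * -α * Gamma (1 - α) / ((-α + 2) * Gamma (1 - α / 2) ^ 2)) =
      α * Gamma (1 - α) / ((2 - α) * Gamma (1 - α / 2) ^ 2) := by
    rw [show -α + 2 = 2 - α by ring]
    field_simp
  rw [circAvg_norm_sub_eq_mul (fun r => 1 / ((r ^ α : ℝ) : ℂ)) hw,
    circAvg_norm_sub_one (fun r => 1 / ((r ^ α : ℝ) : ℂ)), intervalIntegral.integral_congr hpt,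
    integral_exp_two_mul_I_mul_two_mul_sin_rpow (by linarith), show -α / 2 + 1 = 1 - α / 2 by ring,
    show -α + 1 = 1 - α by ring, ← hcoeff]
  push_cast
  ring

theorem stmt4 (α : ℝ) (hα0 : 0 < α) (hα1 : α < 1) (w : ℂ) (hw : ‖w‖ = 1) :
    circAvg (fun τ => 1 / ((‖τ - w‖ ^ α : ℝ) : ℂ)) =
      ((α * Real.Gamma (1 - α) / ((2 - α) * Real.Gamma (1 - α / 2) ^ 2) : ℝ) : ℂ) * w :=
  stmt4_general α hα1 w hw
end

section
/- Let 0 < α < 1 and for each integer n ≥ 1 set γ_n = 2(1+n)/(1−α/2) − (1+α/2)_n/(1−α/2)_n − (1+α/2)_{n+1}/(1−α/2)_{n+1}. Then there exist constants C₁ > 0 and C₂ > 0 (depending only on α) such that C₁ n ≤ γ_n ≤ C₂ n for every integer n ≥ 1. -/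
/-!
Write `r_n = (1+α/2)_n / (1-α/2)_n`, so that `γ_n = 2(1+n)/(1-α/2) - r_n - r_{n+1}`.
Since `r_{n+1} = r_n (x+b+n)/(x+n)` with `x = 1-α/2` and `b = α ≤ 1`, induction gives the linear
bound `r_n ≤ 1 + b n / x`; plugging it in leaves exactly `γ_n ≥ 2(1-α) n / (1-α/2)`.
The upper bound only needs `r_n ≥ 0`.
-/

/-- The Pochhammer symbol `(x)_n = x (x+1) ⋯ (x+n-1)`. -/
noncomputable def poch (x : ℝ) (n : ℕ) : ℝ := (ascPochhammer ℝ n).eval x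

lemma poch_succ (x : ℝ) (n : ℕ) : poch x (n + 1) = poch x n * (x + n) :=
  ascPochhammer_succ_eval n x

lemma poch_pos {x : ℝ} (hx : 0 < x) (n : ℕ) : 0 < poch x n :=
  ascPochhammer_pos n x hx

lemma mul_poch_add_le {x b : ℝ} (hx : 0 < x) (hb0 : 0 ≤ b) (hb1 : b ≤ 1) (n : ℕ) :
    x * poch (x + b) n ≤ (x + b * n) * poch x n := by
  induction n with
  | zero => simp [poch]
  | succ n ih =>
    have hn : (0 : ℝ) ≤ n := n.cast_nonneg
    -- `(x + b(n+1))(x+n) - (x+bn)(x+b+n) = b(1-b)n ≥ 0`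
    have hstep : (x + b * n) * (x + b + n) ≤ (x + b * (n + 1)) * (x + n) := by
      nlinarith [mul_nonneg (mul_nonneg hb0 (sub_nonneg.2 hb1)) hn]
    calc x * poch (x + b) (n + 1) = x * poch (x + b) n * (x + b + n) := by
          rw [poch_succ, mul_assoc]
      _ ≤ (x + b * n) * poch x n * (x + b + n) := by gcongr
      _ = (x + b * n) * (x + b + n) * poch x n := by ring
      _ ≤ (x + b * (n + 1)) * (x + n) * poch x n := by gcongr; exact (poch_pos hx n).le
      _ = (x + b * ↑(n + 1)) * poch x (n + 1) := by rw [poch_succ]; push_cast; ring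

lemma poch_add_div_poch_le {x b : ℝ} (hx : 0 < x) (hb0 : 0 ≤ b) (hb1 : b ≤ 1) (n : ℕ) :
    poch (x + b) n / poch x n ≤ 1 + b * n / x := by
  rw [div_le_iff₀ (poch_pos hx n), one_add_div hx.ne', div_mul_eq_mul_div,
    le_div_iff₀ hx, mul_comm]
  exact mul_poch_add_le hx hb0 hb1 n

theorem stmt8 (α : ℝ) (hα0 : 0 < α) (hα1 : α < 1) :
    ∃ C₁ C₂ : ℝ, 0 < C₁ ∧ 0 < C₂ ∧ ∀ n : ℕ, 1 ≤ n →
      C₁ * n ≤ 2 * (1 + (n : ℝ)) / (1 - α / 2) - poch (1 + α / 2) n / poch (1 - α / 2) n -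
          poch (1 + α / 2) (n + 1) / poch (1 - α / 2) (n + 1) ∧
      2 * (1 + (n : ℝ)) / (1 - α / 2) - poch (1 + α / 2) n / poch (1 - α / 2) n -
          poch (1 + α / 2) (n + 1) / poch (1 - α / 2) (n + 1) ≤ C₂ * n := by
  have hx : 0 < 1 - α / 2 := by linarith
  have hx' : 0 < 1 + α / 2 := by linarith
  have hratio (m : ℕ) : poch (1 + α / 2) m / poch (1 - α / 2) m ≤ 1 + α * m / (1 - α / 2) := by
    have h := poch_add_div_poch_le hx hα0.le hα1.le m
    rwa [show 1 - α / 2 + α = 1 + α / 2 by ring] at h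
  have hratio_nonneg (m : ℕ) : 0 ≤ poch (1 + α / 2) m / poch (1 - α / 2) m :=
    div_nonneg (poch_pos hx' m).le (poch_pos hx m).le
  refine ⟨2 * (1 - α) / (1 - α / 2), 4 / (1 - α / 2), by positivity, by positivity, ?_⟩
  intro n hn
  have hn1 : (1 : ℝ) ≤ n := by exact_mod_cast hn
  have hlower : 2 * (1 - α) / (1 - α / 2) * n =
      2 * (1 + (n : ℝ)) / (1 - α / 2) - (1 + α * n / (1 - α / 2)) -
        (1 + α * ↑(n + 1) / (1 - α / 2)) := by
    have : 2 - α ≠ 0 := by linarith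
    push_cast; field_simp; ring
  have hupper : 2 * (1 + (n : ℝ)) / (1 - α / 2) ≤ 4 / (1 - α / 2) * n := by
    rw [div_mul_eq_mul_div]; exact div_le_div_of_nonneg_right (by linarith) hx.le
  constructor
  · linarith [hratio n, hratio (n + 1)]
  · linarith [hratio_nonneg n, hratio_nonneg (n + 1)]
end

section
/- Let d > 2. There exists ε₀ > 0 such that for every Ω ∈ ℝ and every ε ∈ ℝ with 0 < |ε| ≤ ε₀, the function w ↦ Im(−2dΩ w + w/(2d − εw)) is not identically zero on the unit circle; i.e., there exists w ∈ ℂ with |w| = 1 and Im(−2dΩ w + w/(2d − εw)) ≠ 0. -/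
/-!
Writing `w = e^{iθ}`, the imaginary part factors as `sin θ · (c + a / |a - ε w|²)`, and
`|a - ε w|² = a² - 2 a ε cos θ + ε²` depends on `θ` as soon as `a ε ≠ 0`. So the bracket cannot
vanish at both `w = i` and `w = (3 + 4i)/5`, where `sin θ ≠ 0`.
-/

namespace Complex

lemma im_div_ofReal_sub_ofReal_mul (a ε : ℝ) (w : ℂ) :
    (w / (a - ε * w)).im = a * w.im / normSq (a - ε * w) := by
  rw [div_im]
  simp only [sub_re, sub_im, ofReal_re, ofReal_im, re_ofReal_mul, im_ofReal_mul]
  ring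

lemma im_ofReal_mul_add_div (a c ε : ℝ) (w : ℂ) :
    (c * w + w / (a - ε * w)).im = w.im * (c + a / normSq (a - ε * w)) := by
  rw [add_im, im_ofReal_mul, im_div_ofReal_sub_ofReal_mul]
  ring

lemma exists_norm_eq_one_im_ofReal_mul_add_div_ne_zero {a ε : ℝ} (ha : a ≠ 0) (hε : ε ≠ 0)
    (c : ℝ) : ∃ w : ℂ, ‖w‖ = 1 ∧ (c * w + w / (a - ε * w)).im ≠ 0 := by
  by_contra! h
  set w : ℂ := ⟨3 / 5, 4 / 5⟩
  have hw : ‖w‖ = 1 := by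
    rw [norm_def, normSq_mk, Real.sqrt_eq_one]
    norm_num
  have hcI : c + a / normSq (a - ε * I) = 0 := by
    have := h I (by simp)
    rw [im_ofReal_mul_add_div] at this
    exact (mul_eq_zero.mp this).resolve_left (by simp)
  have hcw : c + a / normSq (a - ε * w) = 0 := by
    have := h w hw
    rw [im_ofReal_mul_add_div] at this
    exact (mul_eq_zero.mp this).resolve_left (by norm_num [w])
  have hnormSq : normSq (a - ε * I) = normSq (a - ε * w) := by
    have hdiv : a * (normSq (a - ε * I))⁻¹ = a * (normSq (a - ε * w))⁻¹ := by
      simp only [← div_eq_mul_inv]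
      linarith
    exact inv_injective (mul_left_cancel₀ ha hdiv)
  simp only [normSq_apply, w, sub_re, sub_im, ofReal_re, ofReal_im, re_ofReal_mul,
    im_ofReal_mul, I_re, I_im] at hnormSq
  exact mul_ne_zero ha hε (by linarith)

end Complex

theorem stmt11 (d : ℝ) (hd : 2 < d) :
    ∃ ε₀ : ℝ, 0 < ε₀ ∧ ∀ (Ω ε : ℝ), 0 < |ε| → |ε| ≤ ε₀ →
      ∃ w : ℂ, ‖w‖ = 1 ∧
        (-2 * (d : ℂ) * (Ω : ℂ) * w + w / (2 * (d : ℂ) - (ε : ℂ) * w)).im ≠ 0 := by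
  refine ⟨1, one_pos, fun Ω ε hε _ => ?_⟩
  have h2d : (2 * d : ℝ) ≠ 0 := by positivity
  obtain ⟨w, hw, him⟩ :=
    Complex.exists_norm_eq_one_im_ofReal_mul_add_div_ne_zero h2d (abs_pos.mp hε) (-2 * d * Ω)
  exact ⟨w, hw, mod_cast him⟩
end

section
/- Let d > 2. There exists ε₀ > 0 such that for every U ∈ ℝ and every ε ∈ ℝ with 0 < |ε| ≤ ε₀, the function w ↦ Im(2U w + w/(εw − 2d)) is not identically zero on the unit circle; i.e., there exists w ∈ ℂ with |w| = 1 and Im(2U w + w/(εw − 2d)) ≠ 0. -/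
/-!
Since `w · conj (ε w - 2d) = ε |w|² - 2d w`, the imaginary part factors as
`Im w · (2U - 2d / |ε w - 2d|²)`, and on the unit circle `|ε w - 2d|² = ε² - 4dε Re w + 4d²`.
If it vanished at two points with `Im w ≠ 0` but different real parts (`i` and `(3 + 4i)/5`),
then `U (ε² - 4dε Re w + 4d²) = d` at both, forcing `U d ε = 0`, hence `d = 0` or `ε = 0`.
-/

open Complex

lemma ofReal_mul_sub_two_mul_ofReal_ne_zero {ε d : ℝ} {w : ℂ} (hd : d ≠ 0) (him : w.im ≠ 0) :
    (ε : ℂ) * w - 2 * (d : ℂ) ≠ 0 := by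
  intro h
  have hε : ε = 0 := by simpa [him] using congrArg im h
  simpa [hε, hd] using congrArg re h

lemma im_two_mul_add_div (U ε d : ℝ) (w : ℂ) :
    (2 * (U : ℂ) * w + w / ((ε : ℂ) * w - 2 * (d : ℂ))).im
      = w.im * (2 * U - 2 * d / normSq ((ε : ℂ) * w - 2 * (d : ℂ))) := by
  simp only [add_im, div_im, mul_im, mul_re, sub_re, sub_im, ofReal_re, ofReal_im, re_ofNat,
    im_ofNat]
  ring

lemma normSq_ofReal_mul_sub_two_mul_ofReal (ε d : ℝ) {w : ℂ} (hw : ‖w‖ = 1) :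
    normSq ((ε : ℂ) * w - 2 * (d : ℂ)) = ε ^ 2 - 4 * d * ε * w.re + 4 * d ^ 2 := by
  have hw' : w.re * w.re + w.im * w.im = 1 := by
    rw [← normSq_apply, normSq_eq_norm_sq, hw, one_pow]
  rw [normSq_apply]
  simp only [sub_re, sub_im, mul_re, mul_im, ofReal_re, ofReal_im, re_ofNat, im_ofNat]
  linear_combination ε ^ 2 * hw'

lemma mul_normSq_eq_of_im_two_mul_add_div_eq_zero {U ε d : ℝ} {w : ℂ} (hd : d ≠ 0)
    (hw : ‖w‖ = 1) (him : w.im ≠ 0)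
    (h : (2 * (U : ℂ) * w + w / ((ε : ℂ) * w - 2 * (d : ℂ))).im = 0) :
    U * (ε ^ 2 - 4 * d * ε * w.re + 4 * d ^ 2) = d := by
  have hN := normSq_pos.2 (ofReal_mul_sub_two_mul_ofReal_ne_zero (ε := ε) hd him)
  rw [im_two_mul_add_div, mul_eq_zero, or_iff_right him, sub_eq_zero, mul_comm,
    eq_div_iff hN.ne'] at h
  rw [← normSq_ofReal_mul_sub_two_mul_ofReal ε d hw]
  linarith

lemma exists_norm_eq_one_im_two_mul_add_div_ne_zero (U : ℝ) {ε d : ℝ} (hε : ε ≠ 0)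
    (hd : d ≠ 0) :
    ∃ w : ℂ, ‖w‖ = 1 ∧ (2 * (U : ℂ) * w + w / ((ε : ℂ) * w - 2 * (d : ℂ))).im ≠ 0 := by
  by_contra! h
  have hw : ‖(⟨3 / 5, 4 / 5⟩ : ℂ)‖ = 1 := by
    rw [norm_def, normSq_mk]; norm_num
  have hI := mul_normSq_eq_of_im_two_mul_add_div_eq_zero hd (by simp) (by simp) (h I (by simp))
  have hw₀ := mul_normSq_eq_of_im_two_mul_add_div_eq_zero hd hw (by norm_num) (h _ hw)
  simp only [I_re, mul_zero, sub_zero] at hI hw₀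
  have hU : U * d * ε = 0 := by linear_combination (5 / 12) * (hI - hw₀)
  simp_all

theorem stmt12 (d : ℝ) (hd : 2 < d) :
    ∃ ε₀ : ℝ, 0 < ε₀ ∧ ∀ (U ε : ℝ), 0 < |ε| → |ε| ≤ ε₀ →
      ∃ w : ℂ, ‖w‖ = 1 ∧
        (2 * (U : ℂ) * w + w / ((ε : ℂ) * w - 2 * (d : ℂ))).im ≠ 0 :=
  ⟨1, one_pos, fun U _ hε _ =>
    exists_norm_eq_one_im_two_mul_add_div_ne_zero U (abs_pos.1 hε) (by linarith)⟩
end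

section
/- Let r < 1 and let f be holomorphic on {z ∈ ℂ : |z| > r} with |f'(w)| ≤ 1 and |f''(w)| ≤ 1 for all w with |w| = 1. Let δ ∈ ℂ with |δ| < 1/2 and set φ(w) = w + δ f(w). Then for every w with |w| = 1, Re(1 + w φ''(w)/φ'(w)) ≥ 1 − |δ|/(1 − |δ|) > 0. In particular the curvature of the curve φ(𝕋), given by κ = (1/|φ'(w)|) Re(1 + w φ''(w)/φ'(w)), is strictly positive, so the domain bounded by φ(𝕋) is strictly convex. -/
/-!
On `𝕋` we have `φ' = 1 + δ f'` and `φ'' = δ f''`, so `|φ'(w)| ≥ 1 - |δ|` and `|w φ''(w)| ≤ |δ|`.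
Hence `w φ''/φ'` has modulus at most `|δ|/(1 - |δ|)`, which bounds its real part from below,
and `|δ| < 1/2` makes the resulting lower bound positive.
-/

open Filter

theorem deriv_id_add_const_mul {f : ℂ → ℂ} {z : ℂ} (hf : DifferentiableAt ℂ f z) (δ : ℂ) :
    deriv (fun z => z + δ * f z) z = 1 + δ * deriv f z :=
  ((hasDerivAt_id z).add (hf.hasDerivAt.const_mul δ)).deriv

theorem deriv_deriv_id_add_const_mul {f : ℂ → ℂ} {s : Set ℂ} (hs : IsOpen s)
    (hf : DifferentiableOn ℂ f s) {w : ℂ} (hw : w ∈ s) (δ : ℂ) :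
    deriv (deriv fun z => z + δ * f z) w = δ * deriv (deriv f) w := by
  have hφ' : deriv (fun z => z + δ * f z) =ᶠ[nhds w] fun z => 1 + δ * deriv f z :=
    eventually_of_mem (hs.mem_nhds hw) fun z hz =>
      deriv_id_add_const_mul (hf.differentiableAt (hs.mem_nhds hz)) δ
  rw [hφ'.deriv_eq, deriv_const_add, deriv_const_mul_field]

theorem one_sub_div_one_sub_le_re_one_add {δ a b w : ℂ} (hδ : ‖δ‖ < 1)
    (ha : ‖a‖ ≤ 1) (hb : ‖b‖ ≤ 1) (hw : ‖w‖ ≤ 1) :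
    1 - ‖δ‖ / (1 - ‖δ‖) ≤ (1 + w * (δ * b) / (1 + δ * a)).re := by
  have hpos : 0 < 1 - ‖δ‖ := sub_pos.mpr hδ
  have hnum : ‖w * (δ * b)‖ ≤ ‖δ‖ :=
    calc ‖w * (δ * b)‖ = ‖w‖ * (‖δ‖ * ‖b‖) := by rw [norm_mul, norm_mul]
      _ ≤ ‖δ‖ * ‖b‖ := mul_le_of_le_one_left (by positivity) hw
      _ ≤ ‖δ‖ := mul_le_of_le_one_right (norm_nonneg δ) hb
  have hden : 1 - ‖δ‖ ≤ ‖1 + δ * a‖ := by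
    have h := norm_sub_le_norm_add (1 : ℂ) (δ * a)
    rw [norm_one, norm_mul] at h
    linarith [mul_le_of_le_one_right (norm_nonneg δ) ha]
  have hquot : ‖w * (δ * b) / (1 + δ * a)‖ ≤ ‖δ‖ / (1 - ‖δ‖) := by
    rw [norm_div]
    exact div_le_div₀ (norm_nonneg δ) hnum hpos hden
  rw [Complex.add_re, Complex.one_re]
  linarith [neg_abs_le (w * (δ * b) / (1 + δ * a)).re,
    Complex.abs_re_le_norm (w * (δ * b) / (1 + δ * a))]

theorem one_sub_div_one_sub_pos {t : ℝ} (ht : t < 1 / 2) : 0 < 1 - t / (1 - t) := by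
  rw [sub_pos, div_lt_one (by linarith)]
  linarith

theorem stmt13 (r : ℝ) (hr : r < 1) (f : ℂ → ℂ)
    (hf : DifferentiableOn ℂ f {z : ℂ | r < ‖z‖})
    (hf1 : ∀ w : ℂ, ‖w‖ = 1 → ‖deriv f w‖ ≤ 1)
    (hf2 : ∀ w : ℂ, ‖w‖ = 1 → ‖deriv (deriv f) w‖ ≤ 1)
    (δ : ℂ) (hδ : ‖δ‖ < 1 / 2) :
    ∀ w : ℂ, ‖w‖ = 1 →
      1 - ‖δ‖ / (1 - ‖δ‖) ≤
          ((1 : ℂ) + w * deriv (deriv (fun z : ℂ => z + δ * f z)) w /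
            deriv (fun z : ℂ => z + δ * f z) w).re ∧
        0 < 1 - ‖δ‖ / (1 - ‖δ‖) := by
  intro w hw
  have hs : IsOpen {z : ℂ | r < ‖z‖} := isOpen_lt continuous_const continuous_norm
  have hws : w ∈ {z : ℂ | r < ‖z‖} := show r < ‖w‖ by rwa [hw]
  rw [deriv_deriv_id_add_const_mul hs hf hws,
    deriv_id_add_const_mul (hf.differentiableAt (hs.mem_nhds hws))]
  exact ⟨one_sub_div_one_sub_le_re_one_add (by linarith) (hf1 w hw) (hf2 w hw) hw.le,
    one_sub_div_one_sub_pos hδ⟩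
end

section
/- Let r < 1 and let h be holomorphic on {z ∈ ℂ : |z| > r} with Laurent expansion h(z) = Σ_{n≥1} a_n z^{−n} (a_n ∈ ℂ) converging for |z| > r. Then for every w ∈ ℂ with |w| = 1, (1/(2πi)) ∫_{𝕋} ((conj(τ) − conj(w))/(τ − w)) · h'(τ) dτ = 0. -/
open Complex Metric Filter ComplexConjugate

theorem summable_norm_of_summable_mul_zpow_neg {𝕜 : Type*} [NormedField 𝕜] {c : ℕ → 𝕜} {x : 𝕜}
    (hx0 : x ≠ 0) (hx1 : ‖x‖ < 1) (hs : Summable fun n : ℕ => c n * x ^ (-(n + 1 : ℤ))) :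
    Summable fun n => ‖c n‖ := by
  obtain ⟨C, hC⟩ := hs.tendsto_atTop_zero.norm.bddAbove_range
  refine .of_nonneg_of_le (fun _ => norm_nonneg _) (fun n => ?_)
    ((summable_geometric_of_lt_one (norm_nonneg x) hx1).mul_left (C * ‖x‖))
  have hCn : ‖c n‖ * (‖x‖ ^ (n + 1))⁻¹ ≤ C := by
    have : ‖c n * x ^ (-(n + 1 : ℤ))‖ ≤ C := hC ⟨n, rfl⟩
    rwa [norm_mul, norm_zpow, show -(n + 1 : ℤ) = -((n + 1 : ℕ) : ℤ) by push_cast; ring,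
      zpow_neg, zpow_natCast] at this
  have hxn : 0 < ‖x‖ ^ (n + 1) := pow_pos (norm_pos_iff.2 hx0) _
  calc ‖c n‖ = ‖c n‖ * (‖x‖ ^ (n + 1))⁻¹ * ‖x‖ ^ (n + 1) := by field_simp
    _ ≤ C * ‖x‖ ^ (n + 1) := by gcongr
    _ = C * ‖x‖ * ‖x‖ ^ n := by ring

theorem circleIntegral.hasSum_of_norm_le {E : Type*} [NormedAddCommGroup E] [NormedSpace ℂ E]
    {ι : Type*} [Countable ι] {f : ι → ℂ → E} {F : ℂ → E} {c : ℂ} {R : ℝ} {b : ι → ℝ}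
    (hf : ∀ i, ContinuousOn (f i) (sphere c |R|)) (hb : ∀ i, ∀ z ∈ sphere c |R|, ‖f i z‖ ≤ b i)
    (hbs : Summable b) (hF : ∀ z ∈ sphere c |R|, HasSum (fun i => f i z) (F z)) :
    HasSum (fun i => ∮ z in C(c, R), f i z) (∮ z in C(c, R), F z) := by
  refine intervalIntegral.hasSum_integral_of_dominated_convergence (fun i _ => |R| * b i)
    (fun i => ?_) (fun i => ?_) ?_ intervalIntegrable_const ?_
  · simp only [deriv_circleMap]
    exact (by fun_prop : Continuous fun θ => circleMap 0 R θ * I).aestronglyMeasurable.smul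
      (hf i).circleIntegrable'.def'.1
  · refine Eventually.of_forall fun θ _ => ?_
    rw [norm_smul, deriv_circleMap, norm_mul, norm_circleMap_zero, norm_I, mul_one]
    exact mul_le_mul_of_nonneg_left (hb i _ (circleMap_mem_sphere' c R θ)) (abs_nonneg R)
  · exact Eventually.of_forall fun _ _ => hbs.mul_left _
  · exact Eventually.of_forall fun θ _ => (hF _ (circleMap_mem_sphere' c R θ)).const_smul _

theorem circleIntegral_eq_zero_of_hasSum_zpow {a : ℕ → ℂ} {k : ℕ → ℤ} {F : ℂ → ℂ} {c : ℂ} {R : ℝ}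
    (hR : R ≠ 0) (hk : ∀ n, k n ≠ -1) (hs : Summable fun n => ‖a n‖ * |R| ^ k n)
    (hF : ∀ z ∈ sphere c |R|, HasSum (fun n => a n * (z - c) ^ k n) (F z)) :
    (∮ z in C(c, R), F z) = 0 := by
  have hc : ∀ z ∈ sphere c |R|, z - c ≠ 0 := fun z hz =>
    sub_ne_zero.2 (ne_of_mem_sphere hz (abs_ne_zero.2 hR))
  have hsum : HasSum (fun n => ∮ z in C(c, R), a n * (z - c) ^ k n) (∮ z in C(c, R), F z) := by
    refine circleIntegral.hasSum_of_norm_le (fun n => ?_) (fun n z hz => ?_) hs hF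
    · exact continuousOn_const.mul
        ((continuousOn_id.sub continuousOn_const).zpow₀ _ fun z hz => Or.inl (hc z hz))
    · rw [norm_mul, norm_zpow, ← dist_eq_norm, mem_sphere.1 hz]
  have hterm : ∀ n, (∮ z in C(c, R), a n * (z - c) ^ k n) = 0 := fun n => by
    rw [circleIntegral.integral_const_mul, circleIntegral.integral_sub_zpow_of_ne (hk n), mul_zero]
  simp only [hterm] at hsum
  exact hsum.unique hasSum_zero

theorem circleIntegral_div_sq_eq_zero_of_hasSum {f : ℂ → ℂ} {a : ℕ → ℂ} {R : ℝ} (hR : R ≠ 0)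
    (hs : Summable fun n : ℕ => ‖a (n + 1)‖ * |R| ^ (-(n + 1 : ℤ)))
    (hf : ∀ z ∈ sphere (0 : ℂ) |R|, HasSum (fun n : ℕ => a (n + 1) * z ^ (-(n + 1 : ℤ))) (f z)) :
    (∮ z in C(0, R), f z / (z - 0) ^ 2) = 0 := by
  have hshift : ∀ {K : Type} [Field K] (x : K), x ≠ 0 → ∀ n : ℕ,
      x ^ (-(n + 3 : ℤ)) = x ^ (-(n + 1 : ℤ)) * x ^ (-2 : ℤ) := fun x hx n => by
    rw [← zpow_add₀ hx]
    ring_nf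
  have hR' : |R| ≠ 0 := abs_ne_zero.2 hR
  refine circleIntegral_eq_zero_of_hasSum_zpow (a := fun n => a (n + 1))
    (k := fun n => -(n + 3 : ℤ)) hR (fun n => by omega) ?_ fun z hz => ?_
  · simpa only [hshift _ hR', mul_assoc] using hs.mul_right (|R| ^ (-2 : ℤ))
  · simpa only [sub_zero, hshift z (ne_of_mem_sphere hz hR'), ← mul_assoc, zpow_neg, zpow_ofNat,
      div_eq_mul_inv] using (hf z hz).mul_right (z ^ (-2 : ℤ))

theorem circleIntegral_deriv_div_sub_eq {h : ℂ → ℂ} {U : Set ℂ} {c : ℂ} {R : ℝ} (hR : R ≠ 0)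
    (hU : IsOpen U) (hh : DifferentiableOn ℂ h U) (hsub : sphere c |R| ⊆ U) :
    (∮ z in C(c, R), deriv h z / (z - c)) = ∮ z in C(c, R), h z / (z - c) ^ 2 := by
  have hc : ∀ z ∈ sphere c |R|, z - c ≠ 0 := fun z hz =>
    sub_ne_zero.2 (ne_of_mem_sphere hz (abs_ne_zero.2 hR))
  have hcont : ContinuousOn (fun z => z - c) (sphere c |R|) := by fun_prop
  have hexact : (∮ z in C(c, R), deriv h z / (z - c) - h z / (z - c) ^ 2) = 0 := by
    refine circleIntegral.integral_eq_zero_of_hasDerivWithinAt' (f := fun z => h z / (z - c))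
      fun z hz => ?_
    have hd : HasDerivAt (fun z => h z / (z - c))
        ((deriv h z * (z - c) - h z * 1) / (z - c) ^ 2) z :=
      (hh.differentiableAt (hU.mem_nhds (hsub hz))).hasDerivAt.div
        ((hasDerivAt_id' z).sub_const c) (hc z hz)
    refine (hd.congr_deriv ?_).hasDerivWithinAt
    field_simp [hc z hz]
  rw [circleIntegral.integral_sub, sub_eq_zero] at hexact
  · exact hexact
  · exact (((hh.deriv hU).continuousOn.mono hsub).div hcont hc).circleIntegrable'
  · exact ((hh.continuousOn.mono hsub).div (hcont.pow 2) fun z hz =>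
      pow_ne_zero 2 (hc z hz)).circleIntegrable'

theorem conj_sub_conj_div_sub_of_norm_eq_one {z w : ℂ} (hz : ‖z‖ = 1) (hw : ‖w‖ = 1)
    (hzw : z ≠ w) : (conj z - conj w) / (z - w) = -(z * w)⁻¹ := by
  have hz0 : z ≠ 0 := norm_ne_zero_iff.1 (by simp [hz])
  have hw0 : w ≠ 0 := norm_ne_zero_iff.1 (by simp [hw])
  rw [← inv_eq_conj hz, ← inv_eq_conj hw]
  field_simp [sub_ne_zero.2 hzw]
  ring

theorem circleIntegral_conj_sub_conj_div_sub_mul {g : ℂ → ℂ} {w : ℂ} (hw : ‖w‖ = 1) :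
    (∮ τ in C(0, 1), (conj τ - conj w) / (τ - w) * g τ) =
      -w⁻¹ * ∮ τ in C(0, 1), g τ / (τ - 0) := by
  rw [← circleIntegral.integral_const_mul]
  refine circleIntegral.circleIntegral_congr_codiscreteWithin ?_ one_ne_zero
  filter_upwards [compl_singleton_mem_codiscreteWithin w,
    self_mem_codiscreteWithin (sphere (0 : ℂ) |1|)] with τ hτw hτ
  have hτ1 : ‖τ‖ = 1 := by simpa using hτ
  rw [conj_sub_conj_div_sub_of_norm_eq_one hτ1 hw hτw, sub_zero, mul_inv, div_eq_mul_inv]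
  ring

theorem stmt14 (r : ℝ) (hr : r < 1) (h : ℂ → ℂ) (a : ℕ → ℂ)
    (hh : DifferentiableOn ℂ h {z : ℂ | r < ‖z‖})
    (hsum : ∀ z : ℂ, r < ‖z‖ →
      HasSum (fun n : ℕ => a (n + 1) * z ^ (-(n + 1 : ℤ))) (h z))
    (w : ℂ) (hw : ‖w‖ = 1) :
    circAvg (fun τ =>
      ((starRingEnd ℂ) τ - (starRingEnd ℂ) w) / (τ - w) * deriv h τ) = 0 := by
  have hsphere : sphere (0 : ℂ) |1| ⊆ {z : ℂ | r < ‖z‖} := fun z hz => by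
    simpa [mem_sphere_zero_iff_norm.1 hz] using hr
  obtain ⟨ρ, hρ, hρ1⟩ := exists_between (max_lt hr one_pos)
  obtain ⟨hrρ, hρ0⟩ := max_lt_iff.1 hρ
  have hρnorm : ‖(ρ : ℂ)‖ = ρ := by rw [norm_real, Real.norm_of_nonneg hρ0.le]
  have ha : Summable fun n => ‖a (n + 1)‖ :=
    summable_norm_of_summable_mul_zpow_neg (ofReal_ne_zero.2 hρ0.ne') (hρnorm.symm ▸ hρ1)
      (hsum ρ (hρnorm.symm ▸ hrρ)).summable
  have hvanish : (∮ z in C(0, 1), h z / (z - 0) ^ 2) = 0 :=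
    circleIntegral_div_sq_eq_zero_of_hasSum one_ne_zero (by simpa using ha)
      fun z hz => hsum z (hsphere hz)
  have hkey : (∮ z in C(0, 1), deriv h z / (z - 0)) = 0 :=
    (circleIntegral_deriv_div_sub_eq one_ne_zero
      (isOpen_lt continuous_const continuous_norm) hh hsphere).trans hvanish
  rw [circAvg, circleIntegral_conj_sub_conj_div_sub_mul hw, hkey, mul_zero, mul_zero]
end

section
/- Let r < 1 and let h be holomorphic on {z ∈ ℂ : |z| > r} with Laurent expansion h(z) = Σ_{n≥1} a_n z^{−n} where all a_n are real, converging for |z| > r. Then for every w ∈ ℂ with |w| = 1, (1/(2πi)) ∫_{𝕋} Im[(τ − w)(h(conj(τ)) − h(conj(w)))] / (τ − w)² dτ = 0. -/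
open Complex ComplexConjugate Metric Set MeasureTheory FormalMultilinearSeries
open scoped ENNReal

theorem circleIntegral_congr_off_countable {E : Type*} [NormedAddCommGroup E]
    [NormedSpace ℂ E] {f g : ℂ → E} {c : ℂ} {R : ℝ} {s : Set ℂ} (hR : R ≠ 0) (hs : s.Countable)
    (hfg : EqOn f g (sphere c |R| \ s)) :
    (∮ z in C(c, R), f z) = ∮ z in C(c, R), g z := by
  have hnull : ∀ᵐ θ : ℝ, circleMap c R θ ∉ s :=
    measure_mono_null (fun θ hθ => by simpa using hθ)
      ((hs.preimage_circleMap c hR).measure_zero volume)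
  refine intervalIntegral.integral_congr_ae (hnull.mono fun θ hθ _ => ?_)
  simp only [hfg ⟨circleMap_mem_sphere' c R θ, hθ⟩]

theorem circleIntegral_inv_sq_smul_comp_inv {E : Type*} [NormedAddCommGroup E]
    [NormedSpace ℂ E] (g : ℂ → E) (R : ℝ) :
    (∮ z in C(0, R), (z⁻¹) ^ 2 • g z⁻¹) = ∮ z in C(0, R⁻¹), g z := by
  have hinv : ∀ θ, circleMap 0 R⁻¹ (2 * Real.pi - θ) = (circleMap 0 R θ)⁻¹ := fun θ => by
    rw [circleMap_zero_inv, sub_eq_neg_add, periodic_circleMap]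
  have hderiv : ∀ θ, deriv (circleMap 0 R) θ • ((circleMap 0 R θ)⁻¹ ^ 2 • g (circleMap 0 R θ)⁻¹)
      = deriv (circleMap 0 R⁻¹) (2 * Real.pi - θ) • g (circleMap 0 R⁻¹ (2 * Real.pi - θ)) := by
    intro θ
    rw [smul_smul, deriv_circleMap, deriv_circleMap, hinv]
    congr 1
    rcases eq_or_ne (circleMap 0 R θ) 0 with hz | hz
    · simp [hz]
    · field_simp
  simp only [circleIntegral, hderiv]
  rw [intervalIntegral.integral_comp_sub_left
    (fun θ => deriv (circleMap 0 R⁻¹) θ • g (circleMap 0 R⁻¹ θ)), sub_self, sub_zero]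

theorem DifferentiableOn.circleIntegral_eq_zero_of_lt {E : Type*} [NormedAddCommGroup E]
    [NormedSpace ℂ E] {f : ℂ → E} {c : ℂ} {R ρ : ℝ} (hf : DifferentiableOn ℂ f (ball c R))
    (hρ₀ : 0 ≤ ρ) (hρ : ρ < R) : (∮ z in C(c, ρ), f z) = 0 :=
  (hf.diffContOnCl_ball (closedBall_subset_ball hρ)).circleIntegral_eq_zero hρ₀

theorem DifferentiableOn.conj_conj_ball {f : ℂ → ℂ} {R : ℝ}
    (hf : DifferentiableOn ℂ f (ball 0 R)) :
    DifferentiableOn ℂ (conj ∘ f ∘ conj) (ball 0 R) := fun z hz =>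
  (differentiableAt_conj_conj_iff.2 <| hf.differentiableAt <|
    isOpen_ball.mem_nhds (by simpa using hz)).differentiableWithinAt

theorem ofReal_im_mul_sub_div_sq {F : ℂ → ℂ} {τ w : ℂ} (hτ : ‖τ‖ = 1) (hw : ‖w‖ = 1)
    (hτw : τ ≠ w) :
    ((((τ - w) * (F τ - F w)).im : ℝ) : ℂ) / (τ - w) ^ 2
      = (2 * I)⁻¹ * (dslope F w τ
          - (w⁻¹) ^ 2 * ((τ⁻¹) ^ 2 • dslope (conj ∘ F ∘ conj) w⁻¹ τ⁻¹)) := by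
  have hτ₀ : τ ≠ 0 := by rintro rfl; simp at hτ
  have hw₀ : w ≠ 0 := by rintro rfl; simp at hw
  have hτw' : τ⁻¹ ≠ w⁻¹ := inv_injective.ne hτw
  have hsub : τ - w ≠ 0 := sub_ne_zero.2 hτw
  have hsub' : τ⁻¹ - w⁻¹ ≠ 0 := sub_ne_zero.2 hτw'
  rw [dslope_of_ne _ hτw, dslope_of_ne _ hτw', slope_def_field, slope_def_field]
  simp only [Function.comp_apply, ← inv_eq_conj hτ, ← inv_eq_conj hw, map_inv₀, inv_inv,
    smul_eq_mul, im_eq_sub_conj, map_mul, map_sub]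
  field_simp
  ring

theorem hasSum_mul_pow_of_hasSum_mul_inv_zpow {b : ℕ → ℂ} {z s : ℂ}
    (hs : HasSum (fun n : ℕ => b (n + 1) * z⁻¹ ^ (-(n + 1 : ℤ))) s) :
    HasSum (fun n => (if n = 0 then 0 else b n) * z ^ n) s := by
  set c : ℕ → ℂ := fun n => if n = 0 then 0 else b n
  have hshift : (fun n : ℕ => b (n + 1) * z⁻¹ ^ (-(n + 1 : ℤ)))
      = fun n => c (n + 1) * z ^ (n + 1) := by
    ext n
    rw [inv_zpow', neg_neg, ← Nat.cast_add_one, zpow_natCast]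
    simp [c]
  rw [hshift] at hs
  simpa [c] using (hasSum_nat_add_iff (f := fun n => c n * z ^ n) 1).1 hs

theorem differentiableOn_ofScalarsSum_of_summable {c : ℕ → ℂ} {z : ℂ}
    (hs : Summable fun n => c n * z ^ n) :
    DifferentiableOn ℂ (ofScalarsSum (E := ℂ) c) (ball 0 ‖z‖) := by
  have hrad : (‖z‖₊ : ℝ≥0∞) ≤ (ofScalars ℂ c).radius := by
    refine (ofScalars ℂ c).le_radius_of_tendsto (l := 0) ?_
    simpa using hs.tendsto_atTop_zero.norm
  rw [← coe_nnnorm, ← eball_coe]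
  exact (ofScalars ℂ c).analyticOnNhd.differentiableOn.mono (eball_subset_eball hrad)

theorem circleIntegral_im_mul_sub_div_sq_eq_zero {F : ℂ → ℂ} {R : ℝ} (hR : 1 < R)
    (hF : DifferentiableOn ℂ F (ball 0 R)) {w : ℂ} (hw : ‖w‖ = 1) :
    (∮ τ in C(0, 1), ((((τ - w) * (F τ - F w)).im : ℝ) : ℂ) / (τ - w) ^ 2) = 0 := by
  have hwR : w ∈ ball (0 : ℂ) R := by simpa [hw] using hR
  have hwR' : w⁻¹ ∈ ball (0 : ℂ) R := by simpa [hw] using hR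
  have hsphere : sphere (0 : ℂ) 1 ⊆ ball 0 R := sphere_subset_ball hR
  have hd : DifferentiableOn ℂ (dslope F w) (ball 0 R) :=
    (differentiableOn_dslope (isOpen_ball.mem_nhds hwR)).2 hF
  have hd' : DifferentiableOn ℂ (dslope (conj ∘ F ∘ conj) w⁻¹) (ball 0 R) :=
    (differentiableOn_dslope (isOpen_ball.mem_nhds hwR')).2 hF.conj_conj_ball
  have hint : CircleIntegrable (dslope F w) 0 1 :=
    (hd.continuousOn.mono hsphere).circleIntegrable zero_le_one
  have hint' : CircleIntegrable
      (fun τ => (w⁻¹) ^ 2 * ((τ⁻¹) ^ 2 • dslope (conj ∘ F ∘ conj) w⁻¹ τ⁻¹)) 0 1 := by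
    have hinv : ContinuousOn (fun τ : ℂ => τ⁻¹) (sphere 0 1) :=
      continuousOn_inv₀.mono fun τ hτ => ne_of_mem_sphere hτ one_ne_zero
    have hmaps : MapsTo (fun τ : ℂ => τ⁻¹) (sphere 0 1) (ball 0 R) :=
      fun τ hτ => hsphere (by simpa using hτ)
    exact (continuousOn_const.mul ((hinv.pow 2).smul (hd'.continuousOn.comp hinv hmaps)))
      |>.circleIntegrable zero_le_one
  rw [circleIntegral_congr_off_countable one_ne_zero (countable_singleton w)
      (fun τ hτ => ofReal_im_mul_sub_div_sq (F := F) (by simpa using hτ.1) hw hτ.2),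
    circleIntegral.integral_const_mul, circleIntegral.integral_sub hint hint',
    circleIntegral.integral_const_mul, circleIntegral_inv_sq_smul_comp_inv, inv_one,
    hd.circleIntegral_eq_zero_of_lt zero_le_one hR, hd'.circleIntegral_eq_zero_of_lt zero_le_one hR]
  simp

theorem stmt15_general (r : ℝ) (hr : r < 1) (h : ℂ → ℂ) (a : ℕ → ℝ)
    (hsum : ∀ z : ℂ, r < ‖z‖ →
      HasSum (fun n : ℕ => ((a (n + 1) : ℝ) : ℂ) * z ^ (-(n + 1 : ℤ))) (h z))
    (w : ℂ) (hw : ‖w‖ = 1) :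
    circAvg (fun τ =>
      ((((τ - w) * (h ((starRingEnd ℂ) τ) - h ((starRingEnd ℂ) w))).im : ℝ) : ℂ) /
        (τ - w) ^ 2) = 0 := by
  obtain ⟨t, hrt, ht₁⟩ := exists_between (max_lt hr zero_lt_one)
  have ht₀ : 0 < t := (le_max_right r 0).trans_lt hrt
  have hpow : ∀ z : ℂ, r < ‖z⁻¹‖ →
      HasSum (fun n => (if n = 0 then 0 else (a n : ℂ)) * z ^ n) (h z⁻¹) :=
    fun z hz => hasSum_mul_pow_of_hasSum_mul_inv_zpow (b := fun n => (a n : ℂ)) (hsum _ hz)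
  set F := ofScalarsSum (E := ℂ) fun n => if n = 0 then 0 else (a n : ℂ)
  have hF : DifferentiableOn ℂ F (ball 0 t⁻¹) := by
    simpa [abs_of_pos ht₀] using differentiableOn_ofScalarsSum_of_summable
      (hpow (t : ℂ)⁻¹ (by simpa [abs_of_pos ht₀] using (le_max_left r 0).trans_lt hrt)).summable
  have hFh : ∀ τ : ℂ, ‖τ‖ = 1 → F τ = h (conj τ) := fun τ hτ => by
    simpa [← inv_eq_conj hτ, F, ofScalars_sum_eq] using (hpow τ (by simpa [hτ] using hr)).tsum_eq
  rw [circAvg, circleIntegral.integral_congr zero_le_one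
      (g := fun τ => ((((τ - w) * (F τ - F w)).im : ℝ) : ℂ) / (τ - w) ^ 2) ?_,
    circleIntegral_im_mul_sub_div_sq_eq_zero ((one_lt_inv₀ ht₀).2 ht₁) hF hw, mul_zero]
  intro τ hτ
  simp only [hFh τ (by simpa using hτ), hFh w hw]

theorem stmt15 (r : ℝ) (hr : r < 1) (h : ℂ → ℂ) (a : ℕ → ℝ)
    (hh : DifferentiableOn ℂ h {z : ℂ | r < ‖z‖})
    (hsum : ∀ z : ℂ, r < ‖z‖ →
      HasSum (fun n : ℕ => ((a (n + 1) : ℝ) : ℂ) * z ^ (-(n + 1 : ℤ))) (h z))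
    (w : ℂ) (hw : ‖w‖ = 1) :
    circAvg (fun τ =>
      ((((τ - w) * (h ((starRingEnd ℂ) τ) - h ((starRingEnd ℂ) w))).im : ℝ) : ℂ) /
        (τ - w) ^ 2) = 0 :=
  stmt15_general r hr h a hsum w hw
end

section
/- Let f : 𝕋 → ℂ be Lipschitz with Lipschitz constant L, satisfying f(conj(w)) = conj(f(w)) for all w ∈ 𝕋 (i.e. f has real Fourier coefficients). Let ε ∈ ℝ with |ε| L < 1. Then for all τ ≠ w in 𝕋, the kernel K(τ, w) = [(τ − w)(f(conj(τ)) − f(conj(w))) − (conj(τ) − conj(w))(f(τ) − f(w))] / [(τ − w)((τ − w) + ε(f(τ) − f(w)))] is well defined and satisfies |K(τ, w)| ≤ 2L/(1 − |ε| L). -/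
/-!
The numerator is a difference of two products, each of norm at most `L |τ - w|²`, because
conjugation preserves distances on `𝕋`; the denominator has norm at least
`(1 - |ε| L) |τ - w|²`, because the perturbation `ε (f τ - f w)` has norm at most `|ε| L |τ - w|`.
-/

open ComplexConjugate

theorem mul_norm_le_norm_add_of_norm_le {E : Type*} [SeminormedAddGroup E] {u v : E} {c : ℝ}
    (hv : ‖v‖ ≤ c * ‖u‖) : (1 - c) * ‖u‖ ≤ ‖u + v‖ := by
  have := norm_sub_le (u + v) v
  rw [add_sub_cancel_right] at this
  linarith

theorem norm_mul_sub_mul_div_mul_le {𝕜 : Type*} [NormedField 𝕜] {a b c d e : 𝕜} {L δ : ℝ}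
    (ha : a ≠ 0) (hδ : 0 < δ) (hb : ‖b‖ ≤ L * ‖a‖) (hc : ‖c‖ ≤ ‖a‖) (hd : ‖d‖ ≤ L * ‖a‖)
    (he : δ * ‖a‖ ≤ ‖e‖) :
    ‖(a * b - c * d) / (a * e)‖ ≤ 2 * L / δ := by
  have ha' : 0 < ‖a‖ := norm_pos_iff.mpr ha
  have hL : 0 ≤ L := nonneg_of_mul_nonneg_left ((norm_nonneg b).trans hb) ha'
  have hnum : ‖a * b - c * d‖ ≤ 2 * L * ‖a‖ ^ 2 :=
    calc ‖a * b - c * d‖ ≤ ‖a‖ * ‖b‖ + ‖c‖ * ‖d‖ := by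
          simpa only [norm_mul] using norm_sub_le (a * b) (c * d)
      _ ≤ ‖a‖ * (L * ‖a‖) + ‖a‖ * (L * ‖a‖) := by gcongr
      _ = 2 * L * ‖a‖ ^ 2 := by ring
  have hden : δ * ‖a‖ ^ 2 ≤ ‖a * e‖ := by
    rw [norm_mul]; nlinarith
  calc ‖(a * b - c * d) / (a * e)‖ ≤ 2 * L * ‖a‖ ^ 2 / (δ * ‖a‖ ^ 2) := by
        rw [norm_div]; gcongr
    _ = 2 * L / δ := by field_simp

theorem stmt16_general (f : ℂ → ℂ) (L : ℝ)
    (hLip : ∀ x y : ℂ, ‖x‖ = 1 → ‖y‖ = 1 → ‖f x - f y‖ ≤ L * ‖x - y‖)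
    (ε : ℝ) (hε : |ε| * L < 1) :
    ∀ τ w : ℂ, ‖τ‖ = 1 → ‖w‖ = 1 → τ ≠ w →
      (τ - w) + (ε : ℂ) * (f τ - f w) ≠ 0 ∧
      ‖((τ - w) * (f ((starRingEnd ℂ) τ) - f ((starRingEnd ℂ) w)) -
            ((starRingEnd ℂ) τ - (starRingEnd ℂ) w) * (f τ - f w)) /
          ((τ - w) * ((τ - w) + (ε : ℂ) * (f τ - f w)))‖ ≤
        2 * L / (1 - |ε| * L) := by
  intro τ w hτ hw hne
  have hsub : τ - w ≠ 0 := sub_ne_zero.mpr hne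
  have hδ : 0 < 1 - |ε| * L := by linarith
  have hf := hLip τ w hτ hw
  have hf_conj : ‖f (conj τ) - f (conj w)‖ ≤ L * ‖τ - w‖ := by
    simpa only [← map_sub, Complex.norm_conj] using
      hLip (conj τ) (conj w) (by rwa [Complex.norm_conj]) (by rwa [Complex.norm_conj])
  have hpert : ‖(ε : ℂ) * (f τ - f w)‖ ≤ |ε| * L * ‖τ - w‖ := by
    rw [norm_mul, Complex.norm_real, Real.norm_eq_abs, mul_assoc]
    exact mul_le_mul_of_nonneg_left hf (abs_nonneg ε)
  have hden := mul_norm_le_norm_add_of_norm_le hpert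
  refine ⟨norm_pos_iff.mp (lt_of_lt_of_le (by positivity) hden), ?_⟩
  exact norm_mul_sub_mul_div_mul_le hsub hδ hf_conj
    (by rw [← map_sub, Complex.norm_conj]) hf hden

theorem stmt16 (f : ℂ → ℂ) (L : ℝ)
    (hLip : ∀ x y : ℂ, ‖x‖ = 1 → ‖y‖ = 1 → ‖f x - f y‖ ≤ L * ‖x - y‖)
    (hreal : ∀ w : ℂ, ‖w‖ = 1 → f ((starRingEnd ℂ) w) = (starRingEnd ℂ) (f w))
    (ε : ℝ) (hε : |ε| * L < 1) :
    ∀ τ w : ℂ, ‖τ‖ = 1 → ‖w‖ = 1 → τ ≠ w →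
      (τ - w) + (ε : ℂ) * (f τ - f w) ≠ 0 ∧
      ‖((τ - w) * (f ((starRingEnd ℂ) τ) - f ((starRingEnd ℂ) w)) -
            ((starRingEnd ℂ) τ - (starRingEnd ℂ) w) * (f τ - f w)) /
          ((τ - w) * ((τ - w) + (ε : ℂ) * (f τ - f w)))‖ ≤
        2 * L / (1 - |ε| * L) :=
  stmt16_general f L hLip ε hε
end

section
/- Let 0 < α < 1 and let n ≥ 1 be an integer. Then the following Pochhammer identity holds: [1 − (α/2)_n/(−α/2)_n] + ((1+α/2)/(1−α/2))·[1 − (2+α/2)_n/(2−α/2)_n] − (4n/α)·(α/2)_n/(1−α/2)_n + 4n/(2−α) = 2(1+n)/(1−α/2) − (1+α/2)_n/(1−α/2)_n − (1+α/2)_{n+1}/(1−α/2)_{n+1}. -/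
lemma poch_mul_add (x : ℝ) (n : ℕ) : poch x n * (x + n) = x * poch (x + 1) n := by
  rw [← poch_succ]
  simp [poch, ascPochhammer_succ_left, Polynomial.eval_comp]

lemma poch_eq_mul_poch_add_one_div {x : ℝ} (n : ℕ) (hx : x + n ≠ 0) :
    poch x n = x * poch (x + 1) n / (x + n) :=
  eq_div_of_mul_eq hx (poch_mul_add x n)

lemma poch_add_one_eq_mul_div {x : ℝ} (n : ℕ) (hx : x ≠ 0) :
    poch (x + 1) n = poch x n * (x + n) / x :=
  eq_div_of_mul_eq hx ((mul_comm _ _).trans (poch_mul_add x n).symm)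

theorem stmt17 (α : ℝ) (hα0 : 0 < α) (hα1 : α < 1) (n : ℕ) (hn : 1 ≤ n) :
    (1 - poch (α / 2) n / poch (-(α / 2)) n) +
        ((1 + α / 2) / (1 - α / 2)) * (1 - poch (2 + α / 2) n / poch (2 - α / 2) n) -
        (4 * n / α) * (poch (α / 2) n / poch (1 - α / 2) n) + 4 * n / (2 - α) =
      2 * (1 + (n : ℝ)) / (1 - α / 2) - poch (1 + α / 2) n / poch (1 - α / 2) n -
        poch (1 + α / 2) (n + 1) / poch (1 - α / 2) (n + 1) := by
  obtain ⟨b, rfl⟩ : ∃ b, α = 2 * b := ⟨α / 2, by ring⟩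
  rw [mul_div_cancel_left₀ b two_ne_zero]
  have hb0 : 0 < b := by linarith
  have hn : (1 : ℝ) ≤ n := Nat.one_le_cast.mpr hn
  have hpochB : poch (1 - b) n ≠ 0 := (poch_pos (by linarith) n).ne'
  have h1sub : 1 - b ≠ 0 := by linarith
  have h1add : 1 + b ≠ 0 := by linarith
  have h1subn : 1 - b + n ≠ 0 := by linarith
  have hnsub : -b + n ≠ 0 := by linarith
  have hnadd : b + n ≠ 0 := by linarith
  rw [poch_eq_mul_poch_add_one_div n hnadd, poch_eq_mul_poch_add_one_div n hnsub,
    show 2 + b = 1 + b + 1 by ring, poch_add_one_eq_mul_div n h1add,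
    show 2 - b = 1 - b + 1 by ring, poch_add_one_eq_mul_div n h1sub,
    poch_succ, poch_succ, add_comm b 1, neg_add_eq_sub]
  field_simp
  ring
end
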